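/- arXiv:1407.0465 — 3 statements merged into one kernel-verified Lean document; each statement's English description precedes it below -/
import Mathlib

section
/- Suppose α < β are real numbers, B ≠ 0, and there exists x̄ ∈ ℝⁿ with α < h(x̄) < β. Then f is bounded below on {x ∈ ℝⁿ : α ≤ h(x) ≤ β} if and only if there exists μ ∈ ℝ such that the function x ↦ f(x) + μ₋(h(x) − β) + μ₊(α − h(x)) is bounded below on ℝⁿ. -/
open Matrix

/-- The quadratic function `x ↦ xᵀ M x + 2 mᵀ x + r`. -/
noncomputable def qfun {n : ℕ} (M : Matrix (Fin n) (Fin n) ℝ) (m : Fin n → ℝ) (r : ℝ)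
    (x : Fin n → ℝ) : ℝ :=
  x ⬝ᵥ M *ᵥ x + 2 * (m ⬝ᵥ x) + r


set_option linter.unusedSectionVars false
set_option linter.deprecated false
set_option linter.unusedVariables false



section ScalarHelpers

lemma quadratic_eventually_neg (e2 e1 e0 : ℝ) (h : e2 < 0) :
    ∃ T : ℝ, 1 ≤ T ∧ ∀ t, T ≤ t → e2*t^2 + e1*t + e0 < 0 := by
  set S := |e1| + |e0| with hS
  have hS0 : 0 ≤ S := by positivity
  have hd : 0 ≤ S / (-e2) := div_nonneg hS0 (by linarith)
  refine ⟨1 + S / (-e2), le_add_of_nonneg_right hd, fun t ht => ?_⟩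
  have ht1 : (1:ℝ) ≤ t := le_trans (le_add_of_nonneg_right hd) ht
  have htpos : (0:ℝ) < t := lt_of_lt_of_le one_pos ht1
  have h1 : e1 * t ≤ |e1| * t := by nlinarith [le_abs_self e1]
  have h0 : e0 ≤ |e0| * t := by nlinarith [le_abs_self e0, abs_nonneg e0]
  have hkey : e2 * t ≤ e2 * (1 + S / (-e2)) := mul_le_mul_of_nonpos_left ht (le_of_lt h)
  have heq : e2 * (1 + S / (-e2)) + S = e2 := by
    have h5 : e2 ≠ 0 := ne_of_lt h
    have h4 : e2 * (S / (-e2)) = -S := by rw [mul_div_assoc']; rw [div_neg, neg_eq_iff_eq_neg, neg_neg, mul_comm]; exact mul_div_cancel_right₀ S h5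
    linear_combination h4
  have hstep : e2*t^2 + e1*t + e0 ≤ t * (e2 * t + S) := by nlinarith
  have : t * (e2 * t + S) ≤ t * e2 := by nlinarith
  nlinarith

lemma exists_quadratic_neg (e2 e1 e0 : ℝ) (h : e2 < 0) :
    ∃ t : ℝ, e2*t^2 + e1*t + e0 < 0 := by
  obtain ⟨T, _, hT⟩ := quadratic_eventually_neg e2 e1 e0 h
  exact ⟨T, hT T le_rfl⟩

lemma quadratic_leading_nonneg {e2 e1 e0 T : ℝ}
    (h : ∀ t, T ≤ t → 0 ≤ e2*t^2 + e1*t + e0) : 0 ≤ e2 := by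
  by_contra hneg
  push_neg at hneg
  obtain ⟨T', _, hT'⟩ := quadratic_eventually_neg e2 e1 e0 hneg
  have h1 := h (max T T') (le_max_left _ _)
  have h2 := hT' (max T T') (le_max_right _ _)
  linarith

lemma exists_quartic_neg (e4 e3 e2 e1 e0 : ℝ) (h : e4 < 0) :
    ∃ t : ℝ, e4*t^4 + e3*t^3 + e2*t^2 + e1*t + e0 < 0 := by
  set S := |e3| + |e2| + |e1| + |e0| with hS
  have hS0 : 0 ≤ S := by positivity
  have hd : 0 ≤ S / (-e4) := div_nonneg hS0 (by linarith)
  set t := 1 + S / (-e4) with htdef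
  have ht1 : (1:ℝ) ≤ t := le_add_of_nonneg_right hd
  have htpos : (0:ℝ) < t := lt_of_lt_of_le one_pos ht1
  refine ⟨t, ?_⟩
  have ht2 : t ≤ t^2 := by nlinarith
  have ht3 : t^2 ≤ t^3 := by nlinarith
  have h3 : e3*t^3 ≤ |e3| * t^3 := by nlinarith [le_abs_self e3]
  have h2 : e2*t^2 ≤ |e2| * t^3 := by nlinarith [le_abs_self e2, abs_nonneg e2]
  have h1 : e1*t ≤ |e1| * t^3 := by nlinarith [le_abs_self e1, abs_nonneg e1]
  have h0 : e0 ≤ |e0| * t^3 := by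
    have h01 : e0 ≤ |e0| := le_abs_self e0
    have h02 : (1:ℝ) ≤ t^3 := by nlinarith
    nlinarith [abs_nonneg e0]
  have heq : e4 * t + S = e4 := by
    have h5 : e4 ≠ 0 := ne_of_lt h
    have h4 : e4 * (S / (-e4)) = -S := by rw [mul_div_assoc']; rw [div_neg, neg_eq_iff_eq_neg, neg_neg, mul_comm]; exact mul_div_cancel_right₀ S h5
    rw [htdef]
    linear_combination h4
  have hsum : e4*t^4 + e3*t^3 + e2*t^2 + e1*t + e0 ≤ t^3 * (e4 * t + S) := by nlinarith
  rw [heq] at hsum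
  nlinarith
end ScalarHelpers


section QuadInfra

variable {ι : Type*} [Fintype ι]

/-- quadratic form -/
noncomputable def Qf (M : Matrix ι ι ℝ) (x : ι → ℝ) : ℝ := x ⬝ᵥ M *ᵥ x

/-- general quadratic function -/
noncomputable def quadf (M : Matrix ι ι ℝ) (m : ι → ℝ) (r : ℝ) (x : ι → ℝ) : ℝ :=
  x ⬝ᵥ M *ᵥ x + 2 * (m ⬝ᵥ x) + r

lemma Qf_smul (M : Matrix ι ι ℝ) (t : ℝ) (x : ι → ℝ) : Qf M (t • x) = t^2 * Qf M x := by
  simp [Qf, mulVec_smul, smul_dotProduct, dotProduct_smul, smul_eq_mul]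
  ring

lemma Qf_expand (M : Matrix ι ι ℝ) (a b : ℝ) (x y : ι → ℝ) :
    Qf M (a • x + b • y) =
      a^2 * Qf M x + a*b*(x ⬝ᵥ M *ᵥ y + y ⬝ᵥ M *ᵥ x) + b^2 * Qf M y := by
  simp [Qf, mulVec_add, mulVec_smul, dotProduct_add, add_dotProduct,
    dotProduct_smul, smul_dotProduct, smul_eq_mul]
  ring

lemma symm_dot {M : Matrix ι ι ℝ} (hM : M.IsSymm) (x y : ι → ℝ) :
    x ⬝ᵥ M *ᵥ y = y ⬝ᵥ M *ᵥ x := by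
  calc x ⬝ᵥ M *ᵥ y = x ᵥ* M ⬝ᵥ y := dotProduct_mulVec x M y
    _ = (Mᵀ *ᵥ x) ⬝ᵥ y := by rw [mulVec_transpose]
    _ = (M *ᵥ x) ⬝ᵥ y := by rw [hM.eq]
    _ = y ⬝ᵥ M *ᵥ x := dotProduct_comm _ _

lemma quadf_line {M : Matrix ι ι ℝ} (hM : M.IsSymm) (m : ι → ℝ) (r : ℝ)
    (p u : ι → ℝ) (t : ℝ) :
    quadf M m r (p + t • u) =
      Qf M u * t^2 + 2 * (((M *ᵥ p) ⬝ᵥ u + m ⬝ᵥ u) * t) + quadf M m r p := by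
  have h1 : p ⬝ᵥ M *ᵥ u = (M *ᵥ p) ⬝ᵥ u := by
    rw [symm_dot hM, dotProduct_comm]
  have h2 : u ⬝ᵥ M *ᵥ p = (M *ᵥ p) ⬝ᵥ u := dotProduct_comm _ _
  simp [quadf, Qf, mulVec_add, mulVec_smul, dotProduct_add, add_dotProduct,
    dotProduct_smul, smul_dotProduct, smul_eq_mul, h1, h2]
  ring

end QuadInfra

section Dines

variable {ι : Type*} [Fintype ι]

private lemma collinear_of_cross_eq_zero {v₁ v₂ r₁ r₂ : ℝ} (hr : r₁ ≠ 0 ∨ r₂ ≠ 0)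
    (h : v₁ * r₂ - v₂ * r₁ = 0) : ∃ cc : ℝ, v₁ = cc * r₁ ∧ v₂ = cc * r₂ := by
  have hr2 : r₁^2 + r₂^2 ≠ 0 := by
    rcases hr with h' | h' <;> positivity
  refine ⟨(v₁*r₁ + v₂*r₂)/(r₁^2 + r₂^2), ?_, ?_⟩
  · field_simp
    linear_combination r₂ * h
  · field_simp
    linear_combination (-r₁) * h

private lemma indep_coeff_zero {p₁ p₂ q₁ q₂ a' b' : ℝ} (hD : p₁*q₂ - p₂*q₁ ≠ 0)
    (h1 : a'*p₁ + b'*q₁ = 0) (h2 : a'*p₂ + b'*q₂ = 0) : a' = 0 ∧ b' = 0 := by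
  have hDa : a' * (p₁*q₂ - p₂*q₁) = 0 := by linear_combination q₂ * h1 - q₁ * h2
  have ha : a' = 0 := by
    rcases mul_eq_zero.mp hDa with h | h
    · exact h
    · exact absurd h hD
  subst ha
  have hb1 : b'*q₁ = 0 := by linarith
  have hb2 : b'*q₂ = 0 := by linarith
  have hDb : b' * (p₁*q₂ - p₂*q₁) = 0 := by linear_combination p₁ * hb2 - p₂ * hb1
  rcases mul_eq_zero.mp hDb with h | h
  · exact ⟨rfl, h⟩
  · exact absurd h hD

theorem dines_convex (M₁ M₂ : Matrix ι ι ℝ) :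
    Convex ℝ (Set.range fun x : ι → ℝ => ((Qf M₁ x, Qf M₂ x) : ℝ × ℝ)) := by
  rintro p ⟨x₁, rfl⟩ q ⟨x₂, rfl⟩ θ b hθ hb hab
  simp only
  set p₁ := Qf M₁ x₁ with hp₁
  set p₂ := Qf M₂ x₁ with hp₂
  set q₁ := Qf M₁ x₂ with hq₁
  set q₂ := Qf M₂ x₂ with hq₂
  set w₁ := (x₁ ⬝ᵥ M₁ *ᵥ x₂ + x₂ ⬝ᵥ M₁ *ᵥ x₁)/2 with hw₁
  set w₂ := (x₁ ⬝ᵥ M₂ *ᵥ x₂ + x₂ ⬝ᵥ M₂ *ᵥ x₁)/2 with hw₂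
  set m₁ := (p₁ + q₁)/2 with hm₁
  set m₂ := (p₂ + q₂)/2 with hm₂
  set a₁ := (p₁ - q₁)/2 with ha₁
  set a₂ := (p₂ - q₂)/2 with ha₂
  have htarget : θ • ((p₁, p₂) : ℝ × ℝ) + b • ((q₁, q₂) : ℝ × ℝ)
      = ((θ*p₁ + b*q₁, θ*p₂ + b*q₂) : ℝ × ℝ) := by
    simp [Prod.smul_mk, smul_eq_mul, Prod.mk_add_mk]
  rw [htarget]
  set r₁ := θ*p₁ + b*q₁ with hr₁
  set r₂ := θ*p₂ + b*q₂ with hr₂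
  have hcurve : ∀ ρ : ℝ, 0 ≤ ρ → ∀ φ : ℝ,
      ((ρ * (m₁ + a₁ * Real.cos φ + w₁ * Real.sin φ),
        ρ * (m₂ + a₂ * Real.cos φ + w₂ * Real.sin φ)) : ℝ × ℝ)
        ∈ Set.range fun x : ι → ℝ => ((Qf M₁ x, Qf M₂ x) : ℝ × ℝ) := by
    intro ρ hρ φ
    refine ⟨Real.sqrt ρ • (Real.cos (φ/2) • x₁ + Real.sin (φ/2) • x₂), ?_⟩
    set cφ := Real.cos (φ/2) with hcφ
    set sφ := Real.sin (φ/2) with hsφ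
    have hcs : sφ^2 + cφ^2 = 1 := Real.sin_sq_add_cos_sq (φ/2)
    have hcos : Real.cos φ = 2*cφ^2 - 1 := by
      have h2 : 2*(φ/2) = φ := by ring
      rw [← h2, Real.cos_two_mul]
    have hsin : Real.sin φ = 2*sφ*cφ := by
      have h2 : 2*(φ/2) = φ := by ring
      rw [← h2, Real.sin_two_mul]
      try ring
    have hsq : Real.sqrt ρ ^ 2 = ρ := Real.sq_sqrt hρ
    have hcomp : ∀ (M : Matrix ι ι ℝ) (pk qk wk : ℝ),
        pk = Qf M x₁ → qk = Qf M x₂ → wk = (x₁ ⬝ᵥ M *ᵥ x₂ + x₂ ⬝ᵥ M *ᵥ x₁)/2 →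
        Qf M (Real.sqrt ρ • (cφ • x₁ + sφ • x₂))
          = ρ * ((pk + qk)/2 + (pk - qk)/2 * Real.cos φ + wk * Real.sin φ) := by
      intro M pk qk wk hpk hqk hwk
      rw [Qf_smul, Qf_expand, hsq, hcos, hsin, hpk, hqk, hwk]
      linear_combination (ρ * Qf M x₂) * hcs
    simp only [Prod.mk.injEq]
    exact ⟨hcomp M₁ p₁ q₁ w₁ hp₁ hq₁ hw₁, hcomp M₂ p₂ q₂ w₂ hp₂ hq₂ hw₂⟩
  rcases eq_or_lt_of_le hθ with hθ0 | hθpos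
  · have hb1 : b = 1 := by linarith
    have hm := hcurve 1 zero_le_one Real.pi
    simp only [Real.cos_pi, Real.sin_pi] at hm
    have heq : ((1 * (m₁ + a₁ * (-1) + w₁ * 0), 1 * (m₂ + a₂ * (-1) + w₂ * 0)) : ℝ × ℝ)
        = ((r₁, r₂) : ℝ × ℝ) := by
      rw [Prod.mk.injEq]
      rw [hr₁, hr₂, ← hθ0, hb1, hm₁, hm₂, ha₁, ha₂]
      constructor <;> ring
    rwa [heq] at hm
  rcases eq_or_lt_of_le hb with hb0 | hbpos
  · have hθ1 : θ = 1 := by linarith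
    have hm := hcurve 1 zero_le_one 0
    simp only [Real.cos_zero, Real.sin_zero] at hm
    have heq : ((1 * (m₁ + a₁ * 1 + w₁ * 0), 1 * (m₂ + a₂ * 1 + w₂ * 0)) : ℝ × ℝ)
        = ((r₁, r₂) : ℝ × ℝ) := by
      rw [Prod.mk.injEq]
      rw [hr₁, hr₂, ← hb0, hθ1, hm₁, hm₂, ha₁, ha₂]
      constructor <;> ring
    rwa [heq] at hm
  set D := p₁*q₂ - p₂*q₁ with hD
  clear_value p₁ p₂ q₁ q₂ w₁ w₂ m₁ m₂ a₁ a₂ r₁ r₂ D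
  by_cases hD0 : D = 0
  · have hD0' : p₁*q₂ - p₂*q₁ = 0 := by rw [← hD]; exact hD0
    by_cases hp0 : p₁ = 0 ∧ p₂ = 0
    · have hm := hcurve b (le_of_lt hbpos) Real.pi
      simp only [Real.cos_pi, Real.sin_pi] at hm
      have heq : ((b * (m₁ + a₁ * (-1) + w₁ * 0), b * (m₂ + a₂ * (-1) + w₂ * 0)) : ℝ × ℝ)
          = ((r₁, r₂) : ℝ × ℝ) := by
        rw [Prod.mk.injEq]
        rw [hr₁, hr₂, hm₁, hm₂, ha₁, ha₂, hp0.1, hp0.2]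
        constructor <;> ring
      rwa [heq] at hm
    · have hpne : p₁ ≠ 0 ∨ p₂ ≠ 0 := by tauto
      have hps : p₁^2 + p₂^2 ≠ 0 := by rcases hpne with h' | h' <;> positivity
      set κ := (p₁*q₁ + p₂*q₂)/(p₁^2 + p₂^2) with hκ
      have hq1 : q₁ = κ * p₁ := by
        rw [hκ]; field_simp; linear_combination (-p₂) * hD0'
      have hq2 : q₂ = κ * p₂ := by
        rw [hκ]; field_simp; linear_combination p₁ * hD0'
      set mm := θ + b*κ with hmm
      by_cases hm0 : 0 ≤ mm
      · have hm := hcurve mm hm0 0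
        simp only [Real.cos_zero, Real.sin_zero] at hm
        have heq : ((mm * (m₁ + a₁ * 1 + w₁ * 0), mm * (m₂ + a₂ * 1 + w₂ * 0)) : ℝ × ℝ)
            = ((r₁, r₂) : ℝ × ℝ) := by
          rw [Prod.mk.injEq]
          rw [hr₁, hr₂, hm₁, hm₂, ha₁, ha₂, hmm, hq1, hq2]
          constructor <;> ring
        rwa [heq] at hm
      · push_neg at hm0
        have hκneg : κ < 0 := by
          by_contra hc; push_neg at hc
          have := mul_nonneg (le_of_lt hbpos) hc
          rw [hmm] at hm0
          linarith
        have hκne : κ ≠ 0 := ne_of_lt hκneg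
        have hmκ : 0 ≤ mm/κ := le_of_lt (div_pos_of_neg_of_neg hm0 hκneg)
        have hm := hcurve (mm/κ) hmκ Real.pi
        simp only [Real.cos_pi, Real.sin_pi] at hm
        have heq : ((mm/κ * (m₁ + a₁ * (-1) + w₁ * 0), mm/κ * (m₂ + a₂ * (-1) + w₂ * 0)) : ℝ × ℝ)
            = ((r₁, r₂) : ℝ × ℝ) := by
          rw [Prod.mk.injEq]
          rw [hr₁, hr₂, hm₁, hm₂, ha₁, ha₂, hq1, hq2, hmm]
          constructor <;> (field_simp; ring)
        rwa [heq] at hm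
  · have hD0' : p₁*q₂ - p₂*q₁ ≠ 0 := by rw [← hD]; exact hD0
    have hrne : r₁ ≠ 0 ∨ r₂ ≠ 0 := by
      by_contra hcon
      push_neg at hcon
      obtain ⟨h1, h2⟩ := hcon
      apply hD0
      have e1 : θ*p₁ = -(b*q₁) := by rw [hr₁] at h1; linarith
      have e2 : θ*p₂ = -(b*q₂) := by rw [hr₂] at h2; linarith
      have hθD : θ * (p₁*q₂ - p₂*q₁) = 0 := by linear_combination q₂ * e1 - q₁ * e2
      rw [hD]
      rcases mul_eq_zero.mp hθD with h | h
      · exact absurd h (ne_of_gt hθpos)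
      · exact h
    set E₁ : ℝ → ℝ := fun φ => m₁ + a₁ * Real.cos φ + w₁ * Real.sin φ with hE₁
    set E₂ : ℝ → ℝ := fun φ => m₂ + a₂ * Real.cos φ + w₂ * Real.sin φ with hE₂
    set g : ℝ → ℝ := fun φ => E₁ φ * r₂ - E₂ φ * r₁ with hg
    have hgcont : Continuous g := by
      rw [hg, hE₁, hE₂]
      exact (((continuous_const.add (continuous_const.mul Real.continuous_cos)).add
          (continuous_const.mul Real.continuous_sin)).mul continuous_const).sub
        (((continuous_const.add (continuous_const.mul Real.continuous_cos)).add
          (continuous_const.mul Real.continuous_sin)).mul continuous_const)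
    have hg0 : g 0 = b * D := by
      show E₁ 0 * r₂ - E₂ 0 * r₁ = b * D
      rw [hE₁, hE₂, hD]
      simp only [Real.cos_zero, Real.sin_zero]
      rw [hm₁, hm₂, ha₁, ha₂, hr₁, hr₂]
      ring
    have hgπ : g Real.pi = -(θ * D) := by
      show E₁ Real.pi * r₂ - E₂ Real.pi * r₁ = -(θ * D)
      rw [hE₁, hE₂, hD]
      simp only [Real.cos_pi, Real.sin_pi]
      rw [hm₁, hm₂, ha₁, ha₂, hr₁, hr₂]
      ring
    have hg2π : g (2*Real.pi) = b * D := by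
      show E₁ (2*Real.pi) * r₂ - E₂ (2*Real.pi) * r₁ = b * D
      rw [hE₁, hE₂, hD]
      simp only [Real.cos_two_pi, Real.sin_two_pi]
      rw [hm₁, hm₂, ha₁, ha₂, hr₁, hr₂]
      ring
    have hDsq : 0 < D^2 := by positivity
    have hprod : g 0 * g Real.pi < 0 := by
      rw [hg0, hgπ]
      have hr : b * D * -(θ * D) = -((θ*b)*D^2) := by ring
      rw [hr]
      linarith [mul_pos (mul_pos hθpos hbpos) hDsq]
    have hprod2 : g Real.pi * g (2*Real.pi) < 0 := by
      rw [hgπ, hg2π]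
      have hr : -(θ * D) * (b * D) = -((θ*b)*D^2) := by ring
      rw [hr]
      linarith [mul_pos (mul_pos hθpos hbpos) hDsq]
    have hπpos := Real.pi_pos
    have hg0ne : g 0 ≠ 0 := by
      intro h0; rw [h0, zero_mul] at hprod; exact lt_irrefl 0 hprod
    have hgπne : g Real.pi ≠ 0 := by
      intro h0; rw [h0, mul_zero] at hprod; exact lt_irrefl 0 hprod
    have hg2πne : g (2*Real.pi) ≠ 0 := by
      intro h0; rw [h0, mul_zero] at hprod2; exact lt_irrefl 0 hprod2
    have h0mem : (0:ℝ) ∈ Set.uIcc (g 0) (g Real.pi) := by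
      rcases lt_or_ge (g 0) 0 with h | h
      · have hπ : 0 ≤ g Real.pi := by
          by_contra hc; push_neg at hc
          linarith [mul_pos_of_neg_of_neg h hc]
        rw [Set.mem_uIcc]; left; exact ⟨le_of_lt h, hπ⟩
      · have hπ : g Real.pi ≤ 0 := by
          by_contra hc; push_neg at hc
          linarith [mul_nonneg h (le_of_lt hc)]
        rw [Set.mem_uIcc]; right; exact ⟨hπ, h⟩
    obtain ⟨φ₁, hφ₁mem, hφ₁⟩ := intermediate_value_uIcc (hgcont.continuousOn) h0mem
    have hφ₁Icc : φ₁ ∈ Set.Icc 0 Real.pi := by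
      rwa [Set.uIcc_of_le (le_of_lt hπpos)] at hφ₁mem
    have hφ₁ne0 : φ₁ ≠ 0 := fun h => hg0ne (h ▸ hφ₁)
    have hφ₁neπ : φ₁ ≠ Real.pi := fun h => hgπne (h ▸ hφ₁)
    have hsin₁ : 0 < Real.sin φ₁ :=
      Real.sin_pos_of_pos_of_lt_pi
        (lt_of_le_of_ne hφ₁Icc.1 (Ne.symm hφ₁ne0)) (lt_of_le_of_ne hφ₁Icc.2 hφ₁neπ)
    have h0mem' : (0:ℝ) ∈ Set.uIcc (g Real.pi) (g (2*Real.pi)) := by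
      rcases lt_or_ge (g Real.pi) 0 with h | h
      · have hπ : 0 ≤ g (2*Real.pi) := by
          by_contra hc; push_neg at hc
          linarith [mul_pos_of_neg_of_neg h hc]
        rw [Set.mem_uIcc]; left; exact ⟨le_of_lt h, hπ⟩
      · have hπ : g (2*Real.pi) ≤ 0 := by
          by_contra hc; push_neg at hc
          linarith [mul_nonneg h (le_of_lt hc)]
        rw [Set.mem_uIcc]; right; exact ⟨hπ, h⟩
    obtain ⟨φ₂, hφ₂mem, hφ₂⟩ := intermediate_value_uIcc (hgcont.continuousOn) h0mem'
    have hφ₂Icc : φ₂ ∈ Set.Icc Real.pi (2*Real.pi) := by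
      rwa [Set.uIcc_of_le (by linarith)] at hφ₂mem
    have hφ₂neπ : φ₂ ≠ Real.pi := fun h => hgπne (h ▸ hφ₂)
    have hφ₂ne2π : φ₂ ≠ 2*Real.pi := fun h => hg2πne (h ▸ hφ₂)
    have hsin₂ : Real.sin φ₂ < 0 := by
      have h1 : Real.sin φ₂ = -Real.sin (φ₂ - Real.pi) := by
        have h2 : φ₂ = (φ₂ - Real.pi) + Real.pi := by ring
        nth_rewrite 1 [h2]
        rw [Real.sin_add]
        simp [Real.sin_pi, Real.cos_pi]
      rw [h1, neg_lt, neg_zero]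
      apply Real.sin_pos_of_pos_of_lt_pi
      · have := lt_of_le_of_ne hφ₂Icc.1 (Ne.symm hφ₂neπ); linarith
      · have := lt_of_le_of_ne hφ₂Icc.2 hφ₂ne2π; linarith
    have hφ₁' : E₁ φ₁ * r₂ - E₂ φ₁ * r₁ = 0 := hφ₁
    have hφ₂' : E₁ φ₂ * r₂ - E₂ φ₂ * r₁ = 0 := hφ₂
    obtain ⟨c₁, hc₁a, hc₁b⟩ := collinear_of_cross_eq_zero hrne hφ₁'
    obtain ⟨c₂, hc₂a, hc₂b⟩ := collinear_of_cross_eq_zero hrne hφ₂'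
    have hmem_of_pos : ∀ (cs φs : ℝ), 0 < cs → E₁ φs = cs * r₁ → E₂ φs = cs * r₂ →
        ((r₁, r₂) : ℝ × ℝ) ∈ Set.range fun x : ι → ℝ => ((Qf M₁ x, Qf M₂ x) : ℝ × ℝ) := by
      intro cs φs hcs he1 he2
      have hmem := hcurve (1/cs) (le_of_lt (div_pos one_pos hcs))
      have hmem' := hmem φs
      have hcne : cs ≠ 0 := ne_of_gt hcs
      have he1' : m₁ + a₁ * Real.cos φs + w₁ * Real.sin φs = cs * r₁ := he1
      have he2' : m₂ + a₂ * Real.cos φs + w₂ * Real.sin φs = cs * r₂ := he2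
      have heq : ((1/cs * (m₁ + a₁ * Real.cos φs + w₁ * Real.sin φs),
          1/cs * (m₂ + a₂ * Real.cos φs + w₂ * Real.sin φs)) : ℝ × ℝ)
          = ((r₁, r₂) : ℝ × ℝ) := by
        rw [he1', he2', Prod.mk.injEq]
        constructor <;> field_simp
      rwa [heq] at hmem'
    by_cases hc₁pos : 0 < c₁
    · exact hmem_of_pos c₁ φ₁ hc₁pos hc₁a hc₁b
    by_cases hc₂pos : 0 < c₂
    · exact hmem_of_pos c₂ φ₂ hc₂pos hc₂a hc₂b
    exfalso
    push_neg at hc₁pos hc₂pos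
    set L := Real.sin φ₂ / (Real.sin φ₂ - Real.sin φ₁) with hL
    have hden : Real.sin φ₂ - Real.sin φ₁ < 0 := by linarith
    have hdenne : Real.sin φ₂ - Real.sin φ₁ ≠ 0 := ne_of_lt hden
    have hLdef : L * (Real.sin φ₂ - Real.sin φ₁) = Real.sin φ₂ := by
      rw [hL]; field_simp
    have hLpos : 0 < L := by
      by_contra hc; push_neg at hc
      have h8 := mul_nonneg (neg_nonneg.mpr hc) (neg_nonneg.mpr (le_of_lt hden))
      have h9 : (-L) * (-(Real.sin φ₂ - Real.sin φ₁)) = L * (Real.sin φ₂ - Real.sin φ₁) := by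
        ring
      rw [h9, hLdef] at h8
      linarith
    have hLlt : L < 1 := by
      by_contra hc; push_neg at hc
      have h8 := mul_nonneg (by linarith : (0:ℝ) ≤ L - 1)
        (by linarith : (0:ℝ) ≤ -(Real.sin φ₂ - Real.sin φ₁))
      have h9 : (L - 1) * (-(Real.sin φ₂ - Real.sin φ₁))
          = -(L * (Real.sin φ₂ - Real.sin φ₁)) + (Real.sin φ₂ - Real.sin φ₁) := by ring
      rw [h9, hLdef] at h8
      linarith
    have hysum : L * Real.sin φ₁ + (1 - L) * Real.sin φ₂ = 0 := by
      linear_combination (-1) * hLdef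
    set xs := L * Real.cos φ₁ + (1 - L) * Real.cos φ₂ with hxs
    have hxs1 : -1 ≤ xs := by
      rw [hxs]
      have e1 : L * (-1) ≤ L * Real.cos φ₁ :=
        mul_le_mul_of_nonneg_left (Real.neg_one_le_cos φ₁) (le_of_lt hLpos)
      have e2 : (1-L) * (-1) ≤ (1-L) * Real.cos φ₂ :=
        mul_le_mul_of_nonneg_left (Real.neg_one_le_cos φ₂) (by linarith)
      linarith
    have hxs2 : xs ≤ 1 := by
      rw [hxs]
      have e1 : L * Real.cos φ₁ ≤ L * 1 :=
        mul_le_mul_of_nonneg_left (Real.cos_le_one φ₁) (le_of_lt hLpos)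
      have e2 : (1-L) * Real.cos φ₂ ≤ (1-L) * 1 :=
        mul_le_mul_of_nonneg_left (Real.cos_le_one φ₂) (by linarith)
      linarith
    set ct := L * c₁ + (1 - L) * c₂ with hct
    have hctle : ct ≤ 0 := by
      rw [hct]
      have e1 : L * c₁ ≤ 0 := mul_nonpos_iff.mpr (Or.inl ⟨le_of_lt hLpos, hc₁pos⟩)
      have e2 : (1-L) * c₂ ≤ 0 := mul_nonpos_iff.mpr (Or.inl ⟨by linarith, hc₂pos⟩)
      linarith
    have hcomb1 : m₁ + xs * a₁ = ct * r₁ := by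
      have h1 : L * E₁ φ₁ + (1 - L) * E₁ φ₂ = m₁ + xs * a₁ := by
        simp only [hE₁]
        rw [hxs]
        linear_combination w₁ * hysum
      have h2 : L * E₁ φ₁ + (1 - L) * E₁ φ₂ = ct * r₁ := by
        rw [hc₁a, hc₂a, hct]; ring
      linarith [h1, h2]
    have hcomb2 : m₂ + xs * a₂ = ct * r₂ := by
      have h1 : L * E₂ φ₁ + (1 - L) * E₂ φ₂ = m₂ + xs * a₂ := by
        simp only [hE₂]
        rw [hxs]
        linear_combination w₂ * hysum
      have h2 : L * E₂ φ₁ + (1 - L) * E₂ φ₂ = ct * r₂ := by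
        rw [hc₁b, hc₂b, hct]; ring
      linarith [h1, h2]
    set s₁ := (1 + xs)/2 with hs₁
    have hk1 : (s₁ - ct*θ)*p₁ + ((1 - s₁) - ct*b)*q₁ = 0 := by
      have hm' : m₁ + xs * a₁ = s₁ * p₁ + (1 - s₁) * q₁ := by
        rw [hs₁, hm₁, ha₁]; ring
      rw [hm', hr₁] at hcomb1
      linear_combination hcomb1
    have hk2 : (s₁ - ct*θ)*p₂ + ((1 - s₁) - ct*b)*q₂ = 0 := by
      have hm' : m₂ + xs * a₂ = s₁ * p₂ + (1 - s₁) * q₂ := by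
        rw [hs₁, hm₂, ha₂]; ring
      rw [hm', hr₂] at hcomb2
      linear_combination hcomb2
    obtain ⟨hA0, hB0⟩ := indep_coeff_zero hD0' hk1 hk2
    have h1 : s₁ = ct*θ := by linarith
    have h2 : 1 - s₁ = ct*b := by linarith
    have hct1 : (1:ℝ) = ct := by linear_combination h1 + h2 + ct * hab
    linarith

end Dines

section Blocks

variable {ι : Type*} [Fintype ι]

noncomputable def blk (M : Matrix ι ι ℝ) (m : ι → ℝ) (r : ℝ) :
    Matrix (ι ⊕ Unit) (ι ⊕ Unit) ℝ :=
  Matrix.fromBlocks M (Matrix.of fun i (_ : Unit) => m i) (Matrix.of fun (_ : Unit) j => m j)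
    (Matrix.of fun (_ : Unit) (_ : Unit) => r)

def emb (x : ι → ℝ) (s : ℝ) : ι ⊕ Unit → ℝ := Sum.elim x (fun _ => s)

lemma emb_eq (z : ι ⊕ Unit → ℝ) : emb (fun i => z (Sum.inl i)) (z (Sum.inr ())) = z := by
  funext i
  cases i with
  | inl j => rfl
  | inr u => cases u; rfl

lemma Qf_blk (M : Matrix ι ι ℝ) (m : ι → ℝ) (r : ℝ) (x : ι → ℝ) (s : ℝ) :
    Qf (blk M m r) (emb x s) = Qf M x + 2*(m ⬝ᵥ x)*s + r*s^2 := by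
  unfold Qf blk emb
  rw [Matrix.fromBlocks_mulVec, sumElim_dotProduct_sumElim]
  simp only [Sum.elim_comp_inl, Sum.elim_comp_inr]
  have hC : (Matrix.of fun i (_ : Unit) => m i) *ᵥ (fun _ => s) = fun i => m i * s := by
    funext i; simp [Matrix.mulVec, dotProduct]
  have hR : (Matrix.of fun (_ : Unit) j => m j) *ᵥ x = fun _ : Unit => m ⬝ᵥ x := by
    funext u; simp [Matrix.mulVec, dotProduct]
  have hD : (Matrix.of fun (_ : Unit) (_ : Unit) => r) *ᵥ (fun _ => s) = fun _ : Unit => r * s := by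
    funext u; simp [Matrix.mulVec, dotProduct]
  rw [hC, hR, hD]
  have h1 : x ⬝ᵥ ((M *ᵥ x) + fun i => m i * s) = x ⬝ᵥ M *ᵥ x + (m ⬝ᵥ x) * s := by
    rw [dotProduct_add]
    congr 1
    unfold dotProduct
    rw [Finset.sum_mul]
    exact Finset.sum_congr rfl fun i _ => by ring
  have h2 : (fun _ : Unit => s) ⬝ᵥ ((fun _ : Unit => m ⬝ᵥ x) + fun _ : Unit => r * s)
      = s * (m ⬝ᵥ x) + s * (r * s) := by
    simp [dotProduct, mul_add]
  rw [h1, h2]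
  ring

lemma quadf_emb_one (M : Matrix ι ι ℝ) (m : ι → ℝ) (r : ℝ) (x : ι → ℝ) :
    Qf (blk M m r) (emb x 1) = quadf M m r x := by
  rw [Qf_blk]
  unfold quadf Qf
  ring

lemma quadf_emb_scale (M : Matrix ι ι ℝ) (m : ι → ℝ) (r : ℝ) (x : ι → ℝ) {s : ℝ} (hs : s ≠ 0) :
    Qf (blk M m r) (emb x s) = s^2 * quadf M m r (s⁻¹ • x) := by
  rw [Qf_blk]
  unfold quadf
  have h1 : (s⁻¹ • x) ⬝ᵥ M *ᵥ (s⁻¹ • x) = s⁻¹^2 * (x ⬝ᵥ M *ᵥ x) := Qf_smul M s⁻¹ x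
  rw [h1, dotProduct_smul]
  simp only [smul_eq_mul]
  unfold Qf
  field_simp

lemma Qf_zero (M : Matrix ι ι ℝ) : Qf M 0 = 0 := by
  unfold Qf
  simp

end Blocks

section SLemma

variable {ι : Type*} [Fintype ι]

/-- Yakubovich's S-lemma. -/
theorem slemma (A₀ B₀ : Matrix ι ι ℝ) (hA₀ : A₀.IsSymm) (hB₀ : B₀.IsSymm)
    (a₀ b₀ : ι → ℝ) (c₀ d₀ : ℝ) (x₀ : ι → ℝ) (hx₀ : quadf B₀ b₀ d₀ x₀ < 0)
    (hpos : ∀ x, quadf B₀ b₀ d₀ x ≤ 0 → 0 ≤ quadf A₀ a₀ c₀ x) :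
    ∃ lam : ℝ, 0 ≤ lam ∧ ∀ x, 0 ≤ quadf A₀ a₀ c₀ x + lam * quadf B₀ b₀ d₀ x := by
  have hconv : Convex ℝ (Set.range
      (fun z : ι ⊕ Unit → ℝ => ((Qf (blk B₀ b₀ d₀) z, Qf (blk A₀ a₀ c₀) z) : ℝ × ℝ))) :=
    dines_convex _ _
  have hQconv : Convex ℝ ((Set.Iio (0:ℝ)) ×ˢ (Set.Iio (0:ℝ))) :=
    (convex_Iio (0:ℝ)).prod (convex_Iio (0:ℝ))
  have hQopen : IsOpen ((Set.Iio (0:ℝ)) ×ˢ (Set.Iio (0:ℝ))) :=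
    isOpen_Iio.prod isOpen_Iio
  have hdisj : Disjoint ((Set.Iio (0:ℝ)) ×ˢ (Set.Iio (0:ℝ))) (Set.range
      (fun z : ι ⊕ Unit → ℝ => ((Qf (blk B₀ b₀ d₀) z, Qf (blk A₀ a₀ c₀) z) : ℝ × ℝ))) := by
    rw [Set.disjoint_left]
    rintro w hwQ ⟨z, rfl⟩
    obtain ⟨hw1', hw2'⟩ := hwQ
    have hw1 : Qf (blk B₀ b₀ d₀) z < 0 := hw1'
    have hw2 : Qf (blk A₀ a₀ c₀) z < 0 := hw2'
    clear hw1' hw2'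
    have hz := emb_eq z
    set s := z (Sum.inr ()) with hs
    set xz := fun i => z (Sum.inl i) with hxz
    rw [← hz] at hw1 hw2
    by_cases hs0 : s = 0
    · rw [hs0] at hw1 hw2
      rw [Qf_blk] at hw1 hw2
      simp only [mul_zero, ne_eq, OfNat.ofNat_ne_zero, not_false_eq_true, zero_pow,
        add_zero] at hw1 hw2
      -- hw1 : Qf B₀ xz < 0, hw2 : Qf A₀ xz < 0
      obtain ⟨T, hT1, hT⟩ := quadratic_eventually_neg (Qf B₀ xz)
        (2*((B₀ *ᵥ x₀) ⬝ᵥ xz + b₀ ⬝ᵥ xz)) (quadf B₀ b₀ d₀ x₀) hw1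
      have hfq : ∀ t, T ≤ t → 0 ≤ Qf A₀ xz * t^2
          + 2*(((A₀ *ᵥ x₀) ⬝ᵥ xz + a₀ ⬝ᵥ xz)) * t + quadf A₀ a₀ c₀ x₀ := by
        intro t ht
        have hg : quadf B₀ b₀ d₀ (x₀ + t • xz) ≤ 0 := by
          rw [quadf_line hB₀]
          have := hT t ht
          nlinarith [this]
        have := hpos _ hg
        rw [quadf_line hA₀] at this
        nlinarith [this]
      have : 0 ≤ Qf A₀ xz := quadratic_leading_nonneg hfq
      linarith
    · rw [quadf_emb_scale _ _ _ _ hs0] at hw1 hw2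
      have hs2 : 0 < s^2 := by positivity
      have hb' : quadf B₀ b₀ d₀ (s⁻¹ • xz) < 0 := by
        by_contra hc; push_neg at hc
        nlinarith [mul_nonneg (le_of_lt hs2) hc]
      have := hpos _ (le_of_lt hb')
      nlinarith [mul_nonneg (le_of_lt hs2) this]
  obtain ⟨f, u, hfQ, hfW⟩ := geometric_hahn_banach_open hQconv hQopen hconv hdisj
  have hflin : ∀ w : ℝ × ℝ, f w = w.1 * f (1,0) + w.2 * f (0,1) := by
    intro w
    have hww : w = w.1 • ((1:ℝ),(0:ℝ)) + w.2 • ((0:ℝ),(1:ℝ)) := by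
      ext
      · simp
      · simp
    nth_rewrite 1 [hww]
    rw [map_add, f.map_smul, f.map_smul]
    simp [smul_eq_mul]
  set pp := f (1,0) with hpp
  set qq := f (0,1) with hqq
  have h0W : ((0:ℝ), (0:ℝ)) ∈ Set.range
      (fun z : ι ⊕ Unit → ℝ => ((Qf (blk B₀ b₀ d₀) z, Qf (blk A₀ a₀ c₀) z) : ℝ × ℝ)) := by
    refine ⟨0, ?_⟩
    simp only [Qf_zero]
  have hu0 : u ≤ 0 := by
    have := hfW _ h0W
    have hf0 : f ((0:ℝ), (0:ℝ)) = 0 := by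
      rw [hflin]; simp
    linarith [this, hf0.symm.le]
  -- pp ≥ 0
  have hppnn : 0 ≤ pp := by
    by_contra hc; push_neg at hc
    set t := max 1 ((1 + qq)/(-pp)) with ht
    have htpos : 0 < t := lt_of_lt_of_le one_pos (le_max_left _ _)
    have hwQ : ((-t, -1) : ℝ × ℝ) ∈ (Set.Iio (0:ℝ)) ×ˢ (Set.Iio (0:ℝ)) := by
      refine ⟨?_, ?_⟩
      · show -t < 0; linarith
      · show (-1:ℝ) < 0; norm_num
    have := hfQ _ hwQ
    rw [hflin] at this
    have hthis : -t * pp + -1 * qq < u := this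
    clear this
    have hmul : 1 + qq ≤ t * (-pp) := by
      have h1 : (1 + qq)/(-pp) ≤ t := le_max_right _ _
      have h2 : (0:ℝ) < -pp := by linarith
      exact (div_le_iff₀ h2).mp h1
    nlinarith [hthis]
  have hqqnn : 0 ≤ qq := by
    by_contra hc; push_neg at hc
    set t := max 1 ((1 + pp)/(-qq)) with ht
    have htpos : 0 < t := lt_of_lt_of_le one_pos (le_max_left _ _)
    have hwQ : ((-1, -t) : ℝ × ℝ) ∈ (Set.Iio (0:ℝ)) ×ˢ (Set.Iio (0:ℝ)) := by
      refine ⟨?_, ?_⟩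
      · show (-1:ℝ) < 0; norm_num
      · show -t < 0; linarith
    have := hfQ _ hwQ
    rw [hflin] at this
    have hthis : -1 * pp + -t * qq < u := this
    clear this
    have hmul : 1 + pp ≤ t * (-qq) := by
      have h1 : (1 + pp)/(-qq) ≤ t := le_max_right _ _
      have h2 : (0:ℝ) < -qq := by linarith
      exact (div_le_iff₀ h2).mp h1
    nlinarith [hthis]
  -- nonnegativity of f on the cone
  have hnn : ∀ z : ι ⊕ Unit → ℝ, 0 ≤ Qf (blk B₀ b₀ d₀) z * pp + Qf (blk A₀ a₀ c₀) z * qq := by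
    intro z
    have hval : ∀ τ : ℝ, 0 ≤ τ →
        ((τ * Qf (blk B₀ b₀ d₀) z, τ * Qf (blk A₀ a₀ c₀) z) : ℝ × ℝ) ∈ Set.range
          (fun z : ι ⊕ Unit → ℝ => ((Qf (blk B₀ b₀ d₀) z, Qf (blk A₀ a₀ c₀) z) : ℝ × ℝ)) := by
      intro τ hτ
      refine ⟨Real.sqrt τ • z, ?_⟩
      simp only [Qf_smul, Real.sq_sqrt hτ]
    by_contra hcon
    push_neg at hcon
    set v := Qf (blk B₀ b₀ d₀) z * pp + Qf (blk A₀ a₀ c₀) z * qq with hv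
    set τ := max 1 ((u - 1)/v) with hτ
    have hτpos : (0:ℝ) < τ := lt_of_lt_of_le one_pos (le_max_left _ _)
    have hmem := hval τ (le_of_lt hτpos)
    have := hfW _ hmem
    rw [hflin] at this
    have hthis : u ≤ τ * Qf (blk B₀ b₀ d₀) z * pp + τ * Qf (blk A₀ a₀ c₀) z * qq := this
    clear this
    have hτv : τ * v ≤ u - 1 := by
      have h1 : (u - 1)/v ≤ τ := le_max_right _ _
      exact (div_le_iff_of_neg hcon).mp h1
    nlinarith [hthis, hτv]
  -- conclude
  by_cases hqq0 : qq = 0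
  · exfalso
    have hppos : 0 < pp := by
      rcases eq_or_lt_of_le hppnn with h | h
      · exfalso
        have hw : ((-1, -1) : ℝ × ℝ) ∈ (Set.Iio (0:ℝ)) ×ˢ (Set.Iio (0:ℝ)) := by
          refine ⟨?_, ?_⟩ <;> (show (-1:ℝ) < 0; norm_num)
        have h2 := hfQ _ hw
        rw [hflin] at h2
        have h2' : -1 * pp + -1 * qq < u := h2
        rw [← h, hqq0] at h2'
        have : (0:ℝ) < u := by linarith
        linarith
      · exact h
    have h3 := hnn (emb x₀ 1)
    rw [quadf_emb_one, hqq0] at h3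
    nlinarith [h3, hx₀]
  · have hqpos : 0 < qq := lt_of_le_of_ne hqqnn (Ne.symm hqq0)
    refine ⟨pp/qq, div_nonneg hppnn (le_of_lt hqpos), fun x => ?_⟩
    have h3 := hnn (emb x 1)
    rw [quadf_emb_one, quadf_emb_one] at h3
    have heq : quadf A₀ a₀ c₀ x + pp/qq * quadf B₀ b₀ d₀ x
        = (quadf B₀ b₀ d₀ x * pp + quadf A₀ a₀ c₀ x * qq)/qq := by
      field_simp
      ring
    rw [heq]
    exact div_nonneg h3 (le_of_lt hqpos)

end SLemma

section LemmaU

variable {ι : Type*} [Fintype ι]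

lemma exists_Qf_ne_zero [DecidableEq ι] {B : Matrix ι ι ℝ} (hB : B.IsSymm) (hBne : B ≠ 0) :
    ∃ z : ι → ℝ, Qf B z ≠ 0 := by
  by_contra hcon
  push_neg at hcon
  apply hBne
  have hxy : ∀ x y : ι → ℝ, x ⬝ᵥ B *ᵥ y = 0 := by
    intro x y
    have h1 := hcon ((1:ℝ) • x + (1:ℝ) • y)
    have h2 := hcon x
    have h3 := hcon y
    rw [Qf_expand] at h1
    have hsym := symm_dot hB x y
    unfold Qf at h1 h2 h3
    nlinarith [h1, h2, h3, hsym]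
  ext i j
  have hthis := hxy (Pi.single i 1) (Pi.single j 1)
  have hv : (B *ᵥ Pi.single j 1) i = B i j := by
    have : (B *ᵥ Pi.single j 1) i = (fun k => B i k) ⬝ᵥ Pi.single j 1 := rfl
    rw [this, dotProduct_single]
    ring
  rw [single_dotProduct, hv, one_mul] at hthis
  simp only [Matrix.zero_apply]
  exact hthis

private lemma key_neg {ε C₀ C₁ s L v : ℝ} (hε : 0 < ε) (hv : v ≤ C₀) (hC₀ : 0 ≤ C₀)
    (hL : |L| ≤ C₁) (hs : max ((C₀ + 2*C₁ + 1)/ε) 1 ≤ |s|) :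
    (-ε)*s^2 + 2*L*s + v < 0 := by
  have hs1 : 1 ≤ |s| := le_trans (le_max_right _ _) hs
  have hsR : (C₀ + 2*C₁ + 1)/ε ≤ |s| := le_trans (le_max_left _ _) hs
  have hC₁ : 0 ≤ C₁ := le_trans (abs_nonneg L) hL
  have h1 : C₀ + 2*C₁ + 1 ≤ ε * |s| := by
    have := (div_le_iff₀ hε).mp hsR
    linarith
  have h2 : ε * |s| ≤ ε * |s| * |s| := by
    nlinarith [mul_pos hε (lt_of_lt_of_le one_pos hs1)]
  have h3 : L * s ≤ C₁ * |s| := by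
    calc L * s ≤ |L * s| := le_abs_self _
    _ = |L| * |s| := abs_mul L s
    _ ≤ C₁ * |s| := by nlinarith [abs_nonneg s]
  have hsq : s^2 = |s| * |s| := by rw [← sq_abs s]; ring
  have h4 : C₀ ≤ C₀ * |s| := by nlinarith
  nlinarith [h1, h2, h3, h4, hsq, abs_nonneg s, hs1]

private lemma final_contra {ε C₀ C₁ R tδ N dw Δa v L : ℝ}
    (hε : 0 < ε) (hRdef : R = max ((C₀+2*C₁+1)/ε) 1) (hRpos : 0 < R)
    (hdw : 0 < dw) (ht : tδ = N/dw) (hNlow : Δa/2 ≤ |N|) (hΔpos : 0 < Δa)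
    (h7 : dw ≤ Δa/(4*R))
    (hv : v ≤ C₀) (hC₀ : 0 ≤ C₀) (hL : |L| ≤ C₁)
    (hb0 : 0 ≤ (-ε)*tδ^2 + 2*L*tδ + v) : False := by
  have habs : |tδ| = |N|/dw := by rw [ht, abs_div, abs_of_pos hdw]
  have hRne : R ≠ 0 := ne_of_gt hRpos
  have h2R : R*dw ≤ Δa/4 := by
    have h11 : R*dw ≤ R*(Δa/(4*R)) := mul_le_mul_of_nonneg_left h7 (le_of_lt hRpos)
    have h12 : R*(Δa/(4*R)) = Δa/4 := by
      field_simp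
    linarith [h11, h12.symm.le, h12.le]
  have hRle : R ≤ |tδ| := by
    rw [habs]
    refine (le_div_iff₀ hdw).mpr ?_
    linarith
  rw [hRdef] at hRle
  have := key_neg hε hv hC₀ hL hRle
  linarith

theorem lemmaU (A₀ B₀ : Matrix ι ι ℝ) (hA₀ : A₀.IsSymm) (hB₀ : B₀.IsSymm)
    (a₀ b₀ : ι → ℝ) (c₀ d₀ α β : ℝ)
    (hz : ∃ z, Qf B₀ z ≠ 0)
    (xb : ι → ℝ) (hxb1 : α < quadf B₀ b₀ d₀ xb) (hxb2 : quadf B₀ b₀ d₀ xb < β)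
    (hband : ∀ x, α ≤ quadf B₀ b₀ d₀ x → quadf B₀ b₀ d₀ x ≤ β → 0 ≤ quadf A₀ a₀ c₀ x)
    (u : ι → ℝ) (hu : Qf B₀ u = 0) : 0 ≤ Qf A₀ u := by
  by_contra hAu
  push_neg at hAu
  have hdotswapB : ∀ p : ι → ℝ, (B₀ *ᵥ p) ⬝ᵥ u = p ⬝ᵥ (B₀ *ᵥ u) := by
    intro p
    rw [dotProduct_comm, symm_dot hB₀]
  have hline : ∀ (p : ι → ℝ) (t : ℝ), quadf B₀ b₀ d₀ (p + t • u)
      = 2*((p ⬝ᵥ (B₀ *ᵥ u) + b₀ ⬝ᵥ u)*t) + quadf B₀ b₀ d₀ p := by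
    intro p t
    rw [quadf_line hB₀, hu, hdotswapB]
    ring
  by_cases hBu : B₀ *ᵥ u = 0
  · by_cases hbu : b₀ ⬝ᵥ u = 0
    · -- Case A : h constant along u-lines
      have hconst : ∀ t : ℝ, quadf B₀ b₀ d₀ (xb + t • u) = quadf B₀ b₀ d₀ xb := by
        intro t
        rw [hline, hBu, hbu]
        simp
      obtain ⟨t0, ht0⟩ := exists_quadratic_neg (Qf A₀ u)
        (2*((A₀ *ᵥ xb) ⬝ᵥ u + a₀ ⬝ᵥ u)) (quadf A₀ a₀ c₀ xb) hAu
      have hb0 := hband (xb + t0 • u)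
        (by rw [hconst]; linarith) (by rw [hconst]; linarith)
      rw [quadf_line hA₀] at hb0
      nlinarith [hb0, ht0]
    · -- Case B : B₀ᵥu = 0 but b₀⬝u ≠ 0
      obtain ⟨z, hzne⟩ := hz
      set aτ := -(Qf B₀ z)/(2*(b₀ ⬝ᵥ u)) with haτdef
      set bτ := -((B₀ *ᵥ xb) ⬝ᵥ z + b₀ ⬝ᵥ z)/(b₀ ⬝ᵥ u) with hbτdef
      have haτne : aτ ≠ 0 := by
        rw [haτdef]
        exact div_ne_zero (neg_ne_zero.mpr hzne) (by simp [hbu])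
      set E4 := Qf A₀ u with hE4
      set L0 := (A₀ *ᵥ xb) ⬝ᵥ u + a₀ ⬝ᵥ u with hL0
      set L1 := (A₀ *ᵥ z) ⬝ᵥ u with hL1
      set F2 := Qf A₀ z with hF2
      set K' := (A₀ *ᵥ xb) ⬝ᵥ z + a₀ ⬝ᵥ z with hK'
      set F0 := quadf A₀ a₀ c₀ xb with hF0
      have he4 : E4 * aτ^2 < 0 := by
        have : 0 < aτ^2 := by positivity
        exact mul_neg_of_neg_of_pos hAu this
      obtain ⟨t1, ht1⟩ := exists_quartic_neg (E4*aτ^2) (2*E4*aτ*bτ + 2*L1*aτ)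
        (E4*bτ^2 + 2*L0*aτ + 2*L1*bτ + F2) (2*L0*bτ + 2*K') F0 he4
      set P := (xb + t1 • z) + (aτ*t1^2 + bτ*t1) • u with hP
      have hAv : (A₀ *ᵥ (xb + t1 • z)) ⬝ᵥ u = (A₀ *ᵥ xb) ⬝ᵥ u + t1*((A₀ *ᵥ z) ⬝ᵥ u) := by
        rw [mulVec_add, mulVec_smul, add_dotProduct, smul_dotProduct]
        simp [smul_eq_mul]
      have hBv : (xb + t1 • z) ⬝ᵥ (B₀ *ᵥ u) = 0 := by
        rw [hBu, dotProduct_zero]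
      have hhP : quadf B₀ b₀ d₀ P = quadf B₀ b₀ d₀ xb := by
        rw [hP, hline, hBv, quadf_line hB₀ b₀ d₀ xb z t1]
        rw [haτdef, hbτdef]
        field_simp
        ring
      have hfP : quadf A₀ a₀ c₀ P = (E4*aτ^2)*t1^4 + (2*E4*aτ*bτ + 2*L1*aτ)*t1^3
          + (E4*bτ^2 + 2*L0*aτ + 2*L1*bτ + F2)*t1^2 + (2*L0*bτ + 2*K')*t1 + F0 := by
        rw [hP, quadf_line hA₀ a₀ c₀ (xb + t1 • z) u (aτ*t1^2 + bτ*t1), hAv,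
          quadf_line hA₀ a₀ c₀ xb z t1]
        rw [hE4, hL0, hL1, hF2, hK', hF0]
        ring
      have hb0 := hband P (by rw [hhP]; linarith) (by rw [hhP]; linarith)
      rw [hfP] at hb0
      linarith [hb0, ht1]
  · -- Case C : B₀ *ᵥ u ≠ 0
    set w := B₀ *ᵥ u with hw
    have hww : 0 < w ⬝ᵥ w := by
      have h1 : w ⬝ᵥ w ≠ 0 := fun hc => hBu (dotProduct_self_eq_zero.mp hc)
      have h2 : 0 ≤ w ⬝ᵥ w := by
        unfold dotProduct
        exact Finset.sum_nonneg fun i _ => mul_self_nonneg _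
      exact lt_of_le_of_ne h2 (Ne.symm h1)
    set pstar := (-(b₀ ⬝ᵥ u)/(w ⬝ᵥ w)) • w with hpstar
    have hpw : pstar ⬝ᵥ w = -(b₀ ⬝ᵥ u) := by
      rw [hpstar, smul_dotProduct, smul_eq_mul]
      field_simp
    have hwv := hw
    by_cases hin : α ≤ quadf B₀ b₀ d₀ pstar ∧ quadf B₀ b₀ d₀ pstar ≤ β
    · -- constant line through pstar
      have hconst : ∀ t : ℝ, quadf B₀ b₀ d₀ (pstar + t • u) = quadf B₀ b₀ d₀ pstar := by
        intro t
        rw [hline, hpw]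
        ring
      obtain ⟨t0, ht0⟩ := exists_quadratic_neg (Qf A₀ u)
        (2*((A₀ *ᵥ pstar) ⬝ᵥ u + a₀ ⬝ᵥ u)) (quadf A₀ a₀ c₀ pstar) hAu
      have hb0 := hband (pstar + t0 • u)
        (by rw [hconst]; exact hin.1) (by rw [hconst]; exact hin.2)
      rw [quadf_line hA₀] at hb0
      nlinarith [hb0, ht0]
    · -- h pstar outside the band
      have hΔne : quadf B₀ b₀ d₀ xb - quadf B₀ b₀ d₀ pstar ≠ 0 := by
        intro hc
        apply hin
        constructor <;> nlinarith [hc]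
      set Δ := quadf B₀ b₀ d₀ xb - quadf B₀ b₀ d₀ pstar with hΔ
      have hΔpos : 0 < |Δ| := abs_pos.mpr hΔne
      set K1 := (B₀ *ᵥ pstar) ⬝ᵥ w + b₀ ⬝ᵥ w with hK1
      set K2 := Qf B₀ w with hK2
      set L0 := (A₀ *ᵥ pstar) ⬝ᵥ u + a₀ ⬝ᵥ u with hL0
      set L1 := (A₀ *ᵥ w) ⬝ᵥ u with hL1
      set G2 := Qf A₀ w with hG2
      set G1 := (A₀ *ᵥ pstar) ⬝ᵥ w + a₀ ⬝ᵥ w with hG1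
      set G0 := quadf A₀ a₀ c₀ pstar with hG0
      set C₀ := |G2| + |2*G1| + |G0| with hC₀
      set C₁ := |L0| + |L1| with hC₁
      set ε := -(Qf A₀ u) with hε
      have hεpos : 0 < ε := by rw [hε]; linarith
      set R := max ((C₀ + 2*C₁ + 1)/ε) 1 with hR
      have hRpos : 0 < R := lt_of_lt_of_le one_pos (le_max_right _ _)
      set S := |2*K1| + |K2| with hS
      have hSnn : 0 ≤ S := by rw [hS]; positivity
      set δ := min (min 1 (|Δ|/(2*S + 1))) (|Δ|/(8*(w ⬝ᵥ w)*R)) with hδ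
      have hδpos : 0 < δ := by
        rw [hδ]
        apply lt_min
        · apply lt_min one_pos
          positivity
        · positivity
      have hδ1 : δ ≤ 1 := le_trans (min_le_left _ _) (min_le_left _ _)
      have hδ2 : δ ≤ |Δ|/(2*S + 1) := le_trans (min_le_left _ _) (min_le_right _ _)
      have hδ3 : δ ≤ |Δ|/(8*(w ⬝ᵥ w)*R) := min_le_right _ _
      clear_value Δ S C₀ C₁ R δ
      -- the shifted point p(δ)
      clear_value pstar
      set pδ := pstar + δ • w with hpδ
      have hhpδ : quadf B₀ b₀ d₀ pδ = K2*δ^2 + 2*(K1*δ) + quadf B₀ b₀ d₀ pstar := by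
        rw [hpδ, quadf_line hB₀, hK2, hK1]
      have hfpδ : quadf A₀ a₀ c₀ pδ = G2*δ^2 + 2*(G1*δ) + G0 := by
        rw [hpδ, quadf_line hA₀, hG2, hG1, hG0]
      -- slope along u at pδ
      have hslopepδ : pδ ⬝ᵥ w + b₀ ⬝ᵥ u = δ * (w ⬝ᵥ w) := by
        rw [hpδ, add_dotProduct, smul_dotProduct, smul_eq_mul, hpw]
        ring
      clear_value w
      set N := quadf B₀ b₀ d₀ xb - quadf B₀ b₀ d₀ pδ with hN
      set tδ := N / (2*δ*(w ⬝ᵥ w)) with htδ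
      set Pq := pδ + tδ • u with hPq
      have hdenpos : 0 < 2*δ*(w ⬝ᵥ w) := by
        have h1 : (0:ℝ) < 2*δ := by linarith
        exact mul_pos h1 hww
      have hdenne : 2*δ*(w ⬝ᵥ w) ≠ 0 := ne_of_gt hdenpos
      clear_value pδ N tδ Pq
      have hhPq : quadf B₀ b₀ d₀ Pq = quadf B₀ b₀ d₀ xb := by
        rw [hPq, hline, hslopepδ, htδ, hN]
        field_simp
        ring
      have hb0 := hband Pq (by rw [hhPq]; linarith) (by rw [hhPq]; linarith)
      -- expansion of f at Pq
      have hLδ : (A₀ *ᵥ pδ) ⬝ᵥ u + a₀ ⬝ᵥ u = L0 + δ*L1 := by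
        rw [hpδ, mulVec_add, mulVec_smul, add_dotProduct, smul_dotProduct, hL0, hL1]
        simp only [smul_eq_mul]
        ring
      clear_value L0 L1 K1 K2 G0 G1 G2 ε
      have hfPq : quadf A₀ a₀ c₀ Pq = (-ε)*tδ^2 + 2*(L0 + δ*L1)*tδ + quadf A₀ a₀ c₀ pδ := by
        rw [hPq, quadf_line hA₀, hLδ, hε]
        ring
      -- bounds
      have hδsq : δ^2 ≤ δ := by
        have h := mul_le_mul_of_nonneg_left hδ1 (le_of_lt hδpos)
        rw [mul_one] at h
        calc δ^2 = δ*δ := by ring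
          _ ≤ δ := h
      have hvbound : quadf A₀ a₀ c₀ pδ ≤ C₀ := by
        rw [hfpδ, hC₀]
        have hδsq1 : δ^2 ≤ 1 := le_trans hδsq hδ1
        have h1 : G2*δ^2 ≤ |G2| := by
          have e1 : G2*δ^2 ≤ |G2| * δ^2 :=
            mul_le_mul_of_nonneg_right (le_abs_self G2) (sq_nonneg δ)
          have e2 : |G2| * δ^2 ≤ |G2| * 1 :=
            mul_le_mul_of_nonneg_left hδsq1 (abs_nonneg G2)
          linarith
        have h2 : 2*(G1*δ) ≤ |2*G1| := by
          have e1 : (2*G1)*δ ≤ |2*G1| * δ :=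
            mul_le_mul_of_nonneg_right (le_abs_self (2*G1)) (le_of_lt hδpos)
          have e2 : |2*G1| * δ ≤ |2*G1| * 1 :=
            mul_le_mul_of_nonneg_left hδ1 (abs_nonneg (2*G1))
          linarith
        have h3 : G0 ≤ |G0| := le_abs_self G0
        linarith
      have hC₀nn : 0 ≤ C₀ := by rw [hC₀]; positivity
      have hLbound : |L0 + δ*L1| ≤ C₁ := by
        rw [hC₁]
        calc |L0 + δ*L1| ≤ |L0| + |δ*L1| := abs_add_le _ _
          _ = |L0| + δ*|L1| := by rw [abs_mul, abs_of_pos hδpos]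
          _ ≤ |L0| + |L1| := by
              have := mul_le_of_le_one_left (abs_nonneg L1) hδ1
              linarith
      have hNval : N = Δ - (K2*δ^2 + 2*(K1*δ)) := by rw [hN, hhpδ, hΔ]; ring
      have hEbound : |K2*δ^2 + 2*(K1*δ)| ≤ δ*S := by
        have hstep : |K2*δ^2 + 2*(K1*δ)| ≤ |K2*δ^2| + |2*(K1*δ)| := abs_add_le _ _
        have hx1 : |K2*δ^2| = |K2| * δ^2 := by
          rw [abs_mul, abs_of_nonneg (sq_nonneg δ)]
        have hx2 : |2*(K1*δ)| = |2*K1| * δ := by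
          have hr : 2*(K1*δ) = (2*K1)*δ := by ring
          rw [hr, abs_mul, abs_of_pos hδpos]
        rw [hx1, hx2] at hstep
        have hx3 : |K2| * δ^2 ≤ |K2| * δ := mul_le_mul_of_nonneg_left hδsq (abs_nonneg K2)
        rw [hS]
        linarith [hstep, hx3]
      have hδS : δ*S ≤ |Δ|/2 := by
        have h9 : δ * (2*S+1) ≤ |Δ| := (le_div_iff₀ (by linarith [hSnn] : (0:ℝ) < 2*S+1)).mp hδ2
        linarith [hδpos]
      have hNlow : |Δ|/2 ≤ |N| := by
        have h5 : |Δ| - |N| ≤ |Δ - N| := abs_sub_abs_le_abs_sub Δ N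
        have h6 : Δ - N = K2*δ^2 + 2*(K1*δ) := by rw [hNval]; ring
        rw [h6] at h5
        linarith [hEbound, hδS, h5]
      have h9 : δ * (8*(w ⬝ᵥ w)*R) ≤ |Δ| :=
        (le_div_iff₀ (mul_pos (mul_pos (by norm_num : (0:ℝ) < 8) hww) hRpos)).mp hδ3
      have h7 : 2*δ*(w ⬝ᵥ w) ≤ |Δ|/(4*R) := by
        rw [le_div_iff₀ (by linarith [hRpos] : (0:ℝ) < 4*R)]
        linarith [h9]
      rw [hfPq] at hb0
      exact final_contra hεpos hR hRpos hdenpos htδ hNlow hΔpos h7 hvbound hC₀nn hLbound hb0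

end LemmaU

section Forward

variable {ι : Type*} [Fintype ι]

theorem forward (A₀ B₀ : Matrix ι ι ℝ) (hA₀ : A₀.IsSymm) (hB₀ : B₀.IsSymm)
    (a₀ b₀ : ι → ℝ) (c₀ d₀ α β : ℝ) (hα : α < 0) (hβ : 0 < β)
    (hz : ∃ z, Qf B₀ z ≠ 0)
    (xb : ι → ℝ) (hxb1 : α < quadf B₀ b₀ d₀ xb) (hxb2 : quadf B₀ b₀ d₀ xb < β)
    (hband : ∀ x, α ≤ quadf B₀ b₀ d₀ x → quadf B₀ b₀ d₀ x ≤ β → 0 ≤ quadf A₀ a₀ c₀ x) :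
    ∃ μ ν : ℝ, ∀ x, ν ≤ quadf A₀ a₀ c₀ x - μ * quadf B₀ b₀ d₀ x := by
  have hgβ : ∀ x, quadf B₀ b₀ (d₀ - β) x = quadf B₀ b₀ d₀ x - β := by
    intro x; unfold quadf; ring
  have hgα : ∀ x, quadf (-B₀) (-b₀) (α - d₀) x = α - quadf B₀ b₀ d₀ x := by
    intro x; unfold quadf
    rw [Matrix.neg_mulVec, dotProduct_neg, neg_dotProduct]
    ring
  by_cases hc1 : BddBelow ((quadf A₀ a₀ c₀) '' {x | quadf B₀ b₀ d₀ x ≤ β})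
  · obtain ⟨m1, hm1⟩ := hc1
    have hfm : ∀ x, quadf A₀ a₀ (c₀ - m1) x = quadf A₀ a₀ c₀ x - m1 := by
      intro x; unfold quadf; ring
    obtain ⟨lam, hlam0, hlam⟩ := slemma A₀ B₀ hA₀ hB₀ a₀ b₀ (c₀ - m1) (d₀ - β) xb
      (by rw [hgβ]; linarith)
      (by intro x hx
          rw [hgβ] at hx
          rw [hfm]
          have hmem : quadf A₀ a₀ c₀ x ∈ (quadf A₀ a₀ c₀) '' {x | quadf B₀ b₀ d₀ x ≤ β} :=
            Set.mem_image_of_mem _ (by simp only [Set.mem_setOf_eq]; linarith)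
          have := hm1 hmem
          linarith)
    refine ⟨-lam, m1 + lam*β, fun x => ?_⟩
    have h1 := hlam x
    rw [hfm, hgβ] at h1
    nlinarith [h1]
  by_cases hc2 : BddBelow ((quadf A₀ a₀ c₀) '' {x | α ≤ quadf B₀ b₀ d₀ x})
  · obtain ⟨m2, hm2⟩ := hc2
    have hfm : ∀ x, quadf A₀ a₀ (c₀ - m2) x = quadf A₀ a₀ c₀ x - m2 := by
      intro x; unfold quadf; ring
    have hBn : (-B₀).IsSymm := by
      unfold Matrix.IsSymm
      rw [Matrix.transpose_neg, hB₀.eq]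
    obtain ⟨lam, hlam0, hlam⟩ := slemma A₀ (-B₀) hA₀ hBn a₀ (-b₀) (c₀ - m2) (α - d₀) xb
      (by rw [hgα]; linarith)
      (by intro x hx
          rw [hgα] at hx
          rw [hfm]
          have hmem : quadf A₀ a₀ c₀ x ∈ (quadf A₀ a₀ c₀) '' {x | α ≤ quadf B₀ b₀ d₀ x} :=
            Set.mem_image_of_mem _ (by simp only [Set.mem_setOf_eq]; linarith)
          have := hm2 hmem
          linarith)
    refine ⟨lam, m2 - lam*α, fun x => ?_⟩
    have h1 := hlam x
    rw [hfm, hgα] at h1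
    nlinarith [h1]
  · exfalso
    rw [not_bddBelow_iff] at hc1 hc2
    obtain ⟨y1, hy1mem, hy1neg⟩ := hc1 0
    obtain ⟨x1, hx1set, hx1eq⟩ := hy1mem
    rw [← hx1eq] at hy1neg
    have hx1S : quadf B₀ b₀ d₀ x1 ≤ β := hx1set
    obtain ⟨y2, hy2mem, hy2neg⟩ := hc2 0
    obtain ⟨x2, hx2set, hx2eq⟩ := hy2mem
    rw [← hx2eq] at hy2neg
    have hx2S : α ≤ quadf B₀ b₀ d₀ x2 := hx2set
    have hx1α : quadf B₀ b₀ d₀ x1 < α := by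
      by_contra hcon; push_neg at hcon
      have := hband x1 hcon hx1S
      linarith
    have hx2β : β < quadf B₀ b₀ d₀ x2 := by
      by_contra hcon; push_neg at hcon
      have := hband x2 hx2S hcon
      linarith
    have hF1ne : quadf A₀ a₀ c₀ x1 ≠ 0 := ne_of_lt hy1neg
    have hF2ne : quadf A₀ a₀ c₀ x2 ≠ 0 := ne_of_lt hy2neg
    set lam1 := (-(quadf A₀ a₀ c₀ x1))⁻¹ with hlam1
    set lam2 := (-(quadf A₀ a₀ c₀ x2))⁻¹ with hlam2
    have hlam1pos : 0 < lam1 := by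
      rw [hlam1]; exact inv_pos.mpr (by linarith)
    have hlam2pos : 0 < lam2 := by
      rw [hlam2]; exact inv_pos.mpr (by linarith)
    set u1 := lam1 * quadf B₀ b₀ d₀ x1 with hu1
    set u2 := lam2 * quadf B₀ b₀ d₀ x2 with hu2
    have hu1neg : u1 < 0 := by
      rw [hu1]
      exact mul_neg_of_pos_of_neg hlam1pos (by linarith)
    have hu2pos : 0 < u2 := by
      rw [hu2]
      exact mul_pos hlam2pos (by linarith)
    have hmem1 : ((u1, (-1:ℝ)) : ℝ × ℝ) ∈ Set.range
        (fun z : ι ⊕ Unit → ℝ => ((Qf (blk B₀ b₀ d₀) z, Qf (blk A₀ a₀ c₀) z) : ℝ × ℝ)) := by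
      refine ⟨Real.sqrt lam1 • emb x1 1, ?_⟩
      simp only [Qf_smul, Real.sq_sqrt (le_of_lt hlam1pos), quadf_emb_one]
      rw [Prod.mk.injEq]
      constructor
      · rw [hu1]
      · rw [hlam1]
        field_simp
    have hmem2 : ((u2, (-1:ℝ)) : ℝ × ℝ) ∈ Set.range
        (fun z : ι ⊕ Unit → ℝ => ((Qf (blk B₀ b₀ d₀) z, Qf (blk A₀ a₀ c₀) z) : ℝ × ℝ)) := by
      refine ⟨Real.sqrt lam2 • emb x2 1, ?_⟩
      simp only [Qf_smul, Real.sq_sqrt (le_of_lt hlam2pos), quadf_emb_one]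
      rw [Prod.mk.injEq]
      constructor
      · rw [hu2]
      · rw [hlam2]
        field_simp
    set θ := u2/(u2 - u1) with hθ
    have hden : 0 < u2 - u1 := by linarith
    have hθ0 : 0 ≤ θ := le_of_lt (div_pos hu2pos hden)
    have hθ1 : θ ≤ 1 := by
      rw [hθ, div_le_one hden]
      linarith
    have hcomb := (dines_convex (blk B₀ b₀ d₀) (blk A₀ a₀ c₀)) hmem1 hmem2 hθ0
      (by linarith : (0:ℝ) ≤ 1 - θ) (by ring)
    have hθval : θ*u1 + (1-θ)*u2 = 0 := by
      rw [hθ]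
      field_simp
      ring
    have hpt : θ • ((u1, (-1:ℝ)) : ℝ × ℝ) + (1-θ) • ((u2, (-1:ℝ)) : ℝ × ℝ)
        = (((0:ℝ), (-1:ℝ)) : ℝ × ℝ) := by
      simp only [Prod.smul_mk, smul_eq_mul, Prod.mk_add_mk, Prod.mk.injEq]
      constructor
      · exact hθval
      · ring
    rw [hpt] at hcomb
    obtain ⟨z, hzeq⟩ := hcomb
    have hzB : Qf (blk B₀ b₀ d₀) z = 0 := congrArg Prod.fst hzeq
    have hzA : Qf (blk A₀ a₀ c₀) z = -1 := congrArg Prod.snd hzeq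
    have hze := emb_eq z
    set s := z (Sum.inr ()) with hs
    set xz := fun i => z (Sum.inl i) with hxz
    rw [← hze] at hzB hzA
    by_cases hs0 : s = 0
    · rw [hs0, Qf_blk] at hzB hzA
      simp only [mul_zero, ne_eq, OfNat.ofNat_ne_zero, not_false_eq_true, zero_pow,
        add_zero] at hzB hzA
      have := lemmaU A₀ B₀ hA₀ hB₀ a₀ b₀ c₀ d₀ α β hz xb hxb1 hxb2 hband xz hzB
      linarith
    · rw [quadf_emb_scale _ _ _ _ hs0] at hzB hzA
      have hs2 : 0 < s^2 := by positivity
      have hy0 : quadf B₀ b₀ d₀ (s⁻¹ • xz) = 0 := by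
        rcases mul_eq_zero.mp hzB with h | h
        · exact absurd h (ne_of_gt hs2)
        · exact h
      have hfy := hband (s⁻¹ • xz) (by rw [hy0]; exact le_of_lt hα)
        (by rw [hy0]; exact le_of_lt hβ)
      nlinarith [mul_nonneg (le_of_lt hs2) hfy, hzA]

end Forward

/-- Primal boundedness is equivalent to dual feasibility for the interval bounded
generalized trust region subproblem, under `B ≠ 0` and the Slater condition. -/
theorem gtrs_bounded_iff_dual_feasible (n : ℕ) (hn : 0 < n)
    (A B : Matrix (Fin n) (Fin n) ℝ) (hA : A.IsSymm) (hB : B.IsSymm)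
    (a b : Fin n → ℝ) (c d : ℝ) (α β : ℝ) (hαβ : α < β)
    (hBne : B ≠ 0)
    (hSlater : ∃ xbar : Fin n → ℝ, α < qfun B b d xbar ∧ qfun B b d xbar < β) :
    BddBelow (qfun A a c ''
        {x : Fin n → ℝ | α ≤ qfun B b d x ∧ qfun B b d x ≤ β}) ↔
      ∃ μ : ℝ, BddBelow (Set.range fun x : Fin n → ℝ =>
        qfun A a c x + (-(min μ 0)) * (qfun B b d x - β)
          + (max μ 0) * (α - qfun B b d x)) := by

  obtain ⟨xb, hxb1, hxb2⟩ := hSlater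
  have hqA : ∀ x, qfun A a c x = quadf A a c x := fun _ => rfl
  have hqB : ∀ x, qfun B b d x = quadf B b d x := fun _ => rfl
  have hpen : ∀ (μ : ℝ) (x : Fin n → ℝ),
      qfun A a c x + (-(min μ 0)) * (qfun B b d x - β) + (max μ 0) * (α - qfun B b d x)
        = (qfun A a c x - μ * qfun B b d x) + (β * min μ 0 + α * max μ 0) := by
    intro μ x
    have hmm : min μ 0 + max μ 0 = μ := by
      rw [min_add_max]; ring
    linear_combination (-(qfun B b d x)) * hmm
  constructor
  · rintro ⟨m, hm⟩
    set t := qfun B b d xb with ht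
    have hgt : ∀ x, quadf B b (d - t) x = qfun B b d x - t := by
      intro x; rw [hqB]; unfold quadf; ring
    have hft : ∀ x, quadf A a (c - m) x = qfun A a c x - m := by
      intro x; rw [hqA]; unfold quadf; ring
    have hz : ∃ z, Qf B z ≠ 0 := exists_Qf_ne_zero hB hBne
    obtain ⟨μ, ν, hμν⟩ := forward A B hA hB a b (c - m) (d - t) (α - t) (β - t)
      (by linarith) (by linarith) hz xb
      (by rw [hgt]; linarith)
      (by rw [hgt]; linarith)
      (by intro x hx1 hx2
          rw [hgt] at hx1 hx2
          rw [hft]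
          have hmem : qfun A a c x ∈ qfun A a c ''
              {x : Fin n → ℝ | α ≤ qfun B b d x ∧ qfun B b d x ≤ β} :=
            Set.mem_image_of_mem _ (by
              simp only [Set.mem_setOf_eq]
              constructor <;> linarith)
          have := hm hmem
          linarith)
    refine ⟨μ, ν + m - μ*t + (β * min μ 0 + α * max μ 0), ?_⟩
    rintro y ⟨x, rfl⟩
    simp only
    rw [hpen μ x]
    have h1 := hμν x
    rw [hft, hgt] at h1
    nlinarith [h1]
  · rintro ⟨μ, ν, hν⟩
    refine ⟨ν, ?_⟩
    rintro y ⟨x, hxmem, rfl⟩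
    obtain ⟨hx1, hx2⟩ := hxmem
    have hpx := hν (Set.mem_range_self x)
    have ht1 : (-(min μ 0)) * (qfun B b d x - β) ≤ 0 :=
      mul_nonpos_iff.mpr (Or.inl ⟨neg_nonneg.mpr (min_le_right μ 0), by linarith⟩)
    have ht2 : (max μ 0) * (α - qfun B b d x) ≤ 0 :=
      mul_nonpos_iff.mpr (Or.inl ⟨le_max_right μ 0, by linarith⟩)
    linarith [hpx, ht1, ht2]
end

section
/- Suppose α < β are real numbers, B = 0, b ≠ 0, A is not positive semidefinite, and there exists ν ≥ 0 such that f(x) + ν·(h(x) − α)·(h(x) − β) ≥ 0 for all x ∈ ℝⁿ. Then the duality gap is infinite: f(x) ≥ 0 for every x ∈ ℝⁿ with α ≤ h(x) ≤ β, while for every μ ∈ ℝ the Lagrangian x ↦ f(x) + μ₋(h(x) − β) + μ₊(α − h(x)) is unbounded below on ℝⁿ. -/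
open Matrix

/-!
On the feasible set `(h - α)(h - β) ≤ 0`, so the certificate with `ν ≥ 0` forces `f ≥ 0` there.
Since `B = 0`, every Lagrangian is again a quadratic function with matrix `A`, and a quadratic
function whose symmetric matrix is not positive semidefinite tends to `-∞` along a direction
`u` with `uᵀ A u < 0`.
-/

open Filter

theorem exists_dotProduct_mulVec_neg_of_not_posSemidef {ι : Type*} [Fintype ι]
    {M : Matrix ι ι ℝ} (hM : M.IsSymm) (h : ¬M.PosSemidef) : ∃ u, u ⬝ᵥ M *ᵥ u < 0 := by
  contrapose! h
  exact .of_dotProduct_mulVec_nonneg hM h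

theorem qfun_smul {n : ℕ} (M : Matrix (Fin n) (Fin n) ℝ) (m : Fin n → ℝ) (r t : ℝ)
    (u : Fin n → ℝ) :
    qfun M m r (t • u) = (u ⬝ᵥ M *ᵥ u) * t ^ 2 + 2 * (m ⬝ᵥ u) * t + r := by
  simp only [qfun, mulVec_smul, dotProduct_smul, smul_dotProduct, smul_eq_mul]
  ring

theorem qfun_add_mul_qfun_zero_add {n : ℕ} (M : Matrix (Fin n) (Fin n) ℝ) (m m' : Fin n → ℝ)
    (r r' k e : ℝ) (x : Fin n → ℝ) :
    qfun M m r x + k * qfun 0 m' r' x + e = qfun M (m + k • m') (r + k * r' + e) x := by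
  simp only [qfun, zero_mulVec, dotProduct_zero, add_dotProduct, smul_dotProduct, smul_eq_mul]
  ring

theorem tendsto_quadratic_atBot {q : ℝ} (hq : q < 0) (L C : ℝ) :
    Tendsto (fun t => q * t ^ 2 + L * t + C) atTop atBot := by
  have hlin : Tendsto (fun t => q * t + L) atTop atBot :=
    tendsto_atBot_add_const_right _ L (tendsto_id.const_mul_atTop_of_neg hq)
  refine tendsto_atBot_add_const_right _ C ?_
  convert tendsto_id.atTop_mul_atBot₀ hlin using 1
  ext t; simp only [id]; ring

theorem tendsto_qfun_smul_atBot {n : ℕ} {M : Matrix (Fin n) (Fin n) ℝ} (m : Fin n → ℝ) (r : ℝ)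
    {u : Fin n → ℝ} (hu : u ⬝ᵥ M *ᵥ u < 0) :
    Tendsto (fun t : ℝ => qfun M m r (t • u)) atTop atBot := by
  simpa only [qfun_smul] using tendsto_quadratic_atBot hu _ r

theorem exists_qfun_lt_of_not_posSemidef {n : ℕ} {M : Matrix (Fin n) (Fin n) ℝ} (hM : M.IsSymm)
    (h : ¬M.PosSemidef) (m : Fin n → ℝ) (r s : ℝ) : ∃ x, qfun M m r x < s := by
  obtain ⟨u, hu⟩ := exists_dotProduct_mulVec_neg_of_not_posSemidef hM h
  obtain ⟨t, ht⟩ := ((tendsto_qfun_smul_atBot m r hu).eventually_lt_atBot s).exists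
  exact ⟨t • u, ht⟩

theorem nonneg_of_add_mul_sub_mul_sub_nonneg {f g α β ν : ℝ} (hν : 0 ≤ ν)
    (hcert : 0 ≤ f + ν * (g - α) * (g - β)) (hα : α ≤ g) (hβ : g ≤ β) : 0 ≤ f := by
  nlinarith [mul_nonneg (mul_nonneg hν (sub_nonneg.2 hα)) (sub_nonneg.2 hβ)]

theorem infinite_duality_gap_general (n : ℕ)
    (A B : Matrix (Fin n) (Fin n) ℝ) (hA : A.IsSymm)
    (a b : Fin n → ℝ) (c d : ℝ) (α β : ℝ)
    (hB0 : B = 0) (hnpsd : ¬ A.PosSemidef)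
    (hcert : ∃ ν : ℝ, 0 ≤ ν ∧ ∀ x : Fin n → ℝ,
      qfun A a c x + ν * (qfun B b d x - α) * (qfun B b d x - β) ≥ 0) :
    (∀ x : Fin n → ℝ, α ≤ qfun B b d x → qfun B b d x ≤ β → qfun A a c x ≥ 0) ∧
      (∀ μ s : ℝ, ∃ x : Fin n → ℝ,
        qfun A a c x + (-(min μ 0)) * (qfun B b d x - β)
          + (max μ 0) * (α - qfun B b d x) < s) := by
  obtain ⟨ν, hν, hcert⟩ := hcert
  refine ⟨fun x hα hβ => nonneg_of_add_mul_sub_mul_sub_nonneg hν (hcert x) hα hβ, fun μ s => ?_⟩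
  subst hB0
  set p := -(min μ 0)
  set q := max μ 0
  obtain ⟨x, hx⟩ := exists_qfun_lt_of_not_posSemidef hA hnpsd
    (a + (p - q) • b) (c + (p - q) * d + (q * α - p * β)) s
  refine ⟨x, ?_⟩
  rw [← qfun_add_mul_qfun_zero_add] at hx
  linarith

/-- Infinite duality gap in the exceptional case: the primal objective is nonnegative on
the feasible set while every Lagrangian is unbounded below. -/
theorem infinite_duality_gap (n : ℕ) (hn : 0 < n)
    (A B : Matrix (Fin n) (Fin n) ℝ) (hA : A.IsSymm) (hB : B.IsSymm)
    (a b : Fin n → ℝ) (c d : ℝ) (α β : ℝ) (hαβ : α < β)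
    (hB0 : B = 0) (hb : b ≠ 0) (hnpsd : ¬ A.PosSemidef)
    (hcert : ∃ ν : ℝ, 0 ≤ ν ∧ ∀ x : Fin n → ℝ,
      qfun A a c x + ν * (qfun B b d x - α) * (qfun B b d x - β) ≥ 0) :
    (∀ x : Fin n → ℝ, α ≤ qfun B b d x → qfun B b d x ≤ β → qfun A a c x ≥ 0) ∧
      (∀ μ s : ℝ, ∃ x : Fin n → ℝ,
        qfun A a c x + (-(min μ 0)) * (qfun B b d x - β)
          + (max μ 0) * (α - qfun B b d x) < s) :=
  infinite_duality_gap_general n A B hA a b c d α β hB0 hnpsd hcert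
end

section
/- Let α ≤ β be real numbers. Suppose h(x) ≥ α for all x ∈ ℝⁿ, there exists x̂ ∈ ℝⁿ with h(x̂) < β, and the system f(x) < 0, α ≤ h(x) ≤ β has no solution x ∈ ℝⁿ. Then there exists a real number ν ≥ 0 such that f(x) + ν·(h(x) − β) ≥ 0 for all x ∈ ℝⁿ; in particular (S₂) holds with μ = −ν. -/
open Matrix

/-!
Homogenize: `F(x, t) = xᵀAx + 2t aᵀx + c t²` and `G(x, t) = xᵀBx + 2t bᵀx + (d - β) t²` are
quadratic forms on `ℝⁿ × ℝ` with `F(x, 1) = f x` and `G(x, 1) = h x - β`. The hypotheses give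
`G < 0 ⇒ F ≥ 0` on all of `ℝⁿ × ℝ`: for `t ≠ 0` rescale to `t = 1`, and `t = 0` is impossible
because `h ≥ α` forces `xᵀBx ≥ 0`. By Dines' theorem the joint range of two quadratic forms is
convex, so it can be separated from the open negative quadrant by a line `p u + q v = 0` with
`p, q ≥ 0`; the Slater point rules out `p = 0`, and `ν = q / p`.
-/

open Real

lemma nonpos_of_forall_pos_mul_le {a b : ℝ} (h : ∀ s > 0, s * a ≤ b) : a ≤ 0 := by
  by_contra! ha
  have := h ((|b| + 1) / a) (by positivity)
  rw [div_mul_cancel₀ _ ha.ne'] at this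
  linarith [le_abs_self b]

lemma exists_eq_zero_of_map_eq_neg {g : ℝ → ℝ} (hg : Continuous g) {a b : ℝ} (h : g b = -g a) :
    ∃ θ, g θ = 0 := by
  have h0 : (0 : ℝ) ∈ Set.uIcc (g a) (g b) := by
    rw [h, Set.mem_uIcc]
    rcases le_total (g a) 0 with h' | h'
    · exact Or.inl ⟨h', by linarith⟩
    · exact Or.inr ⟨by linarith, h'⟩
  obtain ⟨θ, -, hθ⟩ := intermediate_value_uIcc hg.continuousOn h0
  exact ⟨θ, hθ⟩

lemma exists_nonneg_smul_eq_add_of_det_eq_zero {P R : ℝ × ℝ} (h : P.1 * R.2 - P.2 * R.1 = 0) :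
    ∃ l : ℝ, 0 ≤ l ∧ (P + R = l • P ∨ P + R = l • R) := by
  rcases eq_or_ne P 0 with rfl | hP
  · exact ⟨1, zero_le_one, Or.inr (by simp)⟩
  have hN : 0 < P.1 ^ 2 + P.2 ^ 2 := by
    rcases P with ⟨p₁, p₂⟩
    by_cases h₁ : p₁ = 0
    · have h₂ : p₂ ≠ 0 := by simpa [h₁] using hP
      positivity
    · positivity
  set κ := (P.1 * R.1 + P.2 * R.2) / (P.1 ^ 2 + P.2 ^ 2)
  have hR : R = κ • P := by
    ext <;> simp only [Prod.smul_fst, Prod.smul_snd, smul_eq_mul, κ] <;> field_simp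
    · linear_combination -P.2 * h
    · linear_combination P.1 * h
  rcases le_total 0 (1 + κ) with hκ | hκ
  · exact ⟨1 + κ, hκ, Or.inl (by rw [hR, add_smul, one_smul])⟩
  · have hκ0 : κ < 0 := by linarith
    refine ⟨(1 + κ) / κ, div_nonneg_of_nonpos hκ hκ0.le, Or.inr ?_⟩
    rw [hR, smul_smul, div_mul_cancel₀ _ hκ0.ne, add_smul, one_smul]

lemma exists_nonneg_coeffs_of_disjoint_negQuadrant {D : Set (ℝ × ℝ)} (hD : Convex ℝ D)
    (hne : D.Nonempty) (hdisj : ∀ z ∈ D, 0 ≤ z.1 ∨ 0 ≤ z.2) :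
    ∃ p q : ℝ, 0 ≤ p ∧ 0 ≤ q ∧ (p ≠ 0 ∨ q ≠ 0) ∧ ∀ z ∈ D, 0 ≤ p * z.1 + q * z.2 := by
  set N : Set (ℝ × ℝ) := Set.Iio 0 ×ˢ Set.Iio 0
  have hND : Disjoint N D := Set.disjoint_left.2 fun z hzN hzD ↦
    (hdisj z hzD).elim (not_le.2 hzN.1) (not_le.2 hzN.2)
  obtain ⟨f, u, hfN, hfD⟩ := geometric_hahn_banach_open ((convex_Iio 0).prod (convex_Iio 0))
    (isOpen_Iio.prod isOpen_Iio) hD hND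
  set p := f (1, 0)
  set q := f (0, 1)
  have hf (z : ℝ × ℝ) : f z = p * z.1 + q * z.2 := by
    conv_lhs => rw [show z = z.1 • (1, 0) + z.2 • (0, 1) by ext <;> simp]
    rw [map_add, map_smul, map_smul, smul_eq_mul, smul_eq_mul, mul_comm, mul_comm z.2]
  have hu : 0 ≤ u := by
    have h0 : (0 : ℝ × ℝ) ∈ closure N := by
      rw [closure_prod_eq, closure_Iio]; exact ⟨Set.self_mem_Iic, Set.self_mem_Iic⟩
    simpa using closure_lt_subset_le f.continuous continuous_const (closure_mono hfN h0)
  have hp : 0 ≤ p := neg_nonpos.1 <| nonpos_of_forall_pos_mul_le (b := u + q) fun s hs ↦ by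
    have := hfN (-s, -1) ⟨by simpa using hs, by norm_num⟩
    rw [hf] at this; linarith
  have hq : 0 ≤ q := neg_nonpos.1 <| nonpos_of_forall_pos_mul_le (b := u + p) fun s hs ↦ by
    have := hfN (-1, -s) ⟨by norm_num, by simpa using hs⟩
    rw [hf] at this; linarith
  refine ⟨p, q, hp, hq, ?_, fun z hz ↦ hf z ▸ hu.trans (hfD z hz)⟩
  by_contra! hpq
  obtain ⟨z, hz⟩ := hne
  have h₁ := hfN (-1, -1) ⟨by norm_num, by norm_num⟩
  have h₂ := hfD z hz
  rw [hf, hpq.1, hpq.2] at h₁ h₂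
  linarith

namespace QuadraticMap

variable {V : Type*} [AddCommGroup V] [Module ℝ V]

lemma map_smul_add_smul (Q : QuadraticForm ℝ V) (c s : ℝ) (u v : V) :
    Q (c • u + s • v) = c ^ 2 * Q u + s ^ 2 * Q v + c * s * polar Q u v := by
  rw [QuadraticMap.map_add Q, QuadraticMap.map_smul, QuadraticMap.map_smul, polar_smul_left,
    polar_smul_right]
  simp only [smul_eq_mul]; ring

lemma exists_map_eq_add_and_map_eq_add (Q₁ Q₂ : QuadraticForm ℝ V) (u v : V) :
    ∃ w, Q₁ w = Q₁ u + Q₁ v ∧ Q₂ w = Q₂ u + Q₂ v := by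
  -- Rotating `(u, v)` by `θ` keeps `Q u + Q v` fixed; at `θ = π / 2` the determinant of the two
  -- image points has changed sign, so for some `θ` the images are collinear.
  set x : ℝ → V := fun θ ↦ cos θ • u + (-sin θ) • v
  set y : ℝ → V := fun θ ↦ sin θ • u + cos θ • v
  have hsum (Q : QuadraticForm ℝ V) (θ : ℝ) : Q (x θ) + Q (y θ) = Q u + Q v := by
    simp only [x, y, map_smul_add_smul]
    linear_combination (Q u + Q v) * cos_sq_add_sin_sq θ
  have hcont (Q : QuadraticForm ℝ V) : Continuous (Q ∘ x) ∧ Continuous (Q ∘ y) := by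
    simp only [Function.comp_def, x, y, map_smul_add_smul]
    constructor <;> fun_prop
  obtain ⟨θ, hθ⟩ : ∃ θ, Q₁ (x θ) * Q₂ (y θ) - Q₂ (x θ) * Q₁ (y θ) = 0 := by
    refine exists_eq_zero_of_map_eq_neg (a := 0) (b := π / 2) ?_ ?_
    · exact ((hcont Q₁).1.mul (hcont Q₂).2).sub ((hcont Q₂).1.mul (hcont Q₁).2)
    · simp only [x, y, cos_zero, sin_zero, cos_pi_div_two, sin_pi_div_two, neg_zero, neg_smul,
        zero_smul, one_smul, zero_add, add_zero, QuadraticMap.map_neg]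
      ring
  obtain ⟨l, hl, hxy | hxy⟩ := exists_nonneg_smul_eq_add_of_det_eq_zero
    (P := (Q₁ (x θ), Q₂ (x θ))) (R := (Q₁ (y θ), Q₂ (y θ))) hθ
  all_goals
    simp only [Prod.ext_iff, Prod.fst_add, Prod.snd_add, Prod.smul_fst, Prod.smul_snd, smul_eq_mul,
      hsum] at hxy
  · refine ⟨√l • x θ, ?_, ?_⟩ <;> simp [QuadraticMap.map_smul, mul_self_sqrt hl, hxy]
  · refine ⟨√l • y θ, ?_, ?_⟩ <;> simp [QuadraticMap.map_smul, mul_self_sqrt hl, hxy]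

theorem convex_range_prodMk (Q₁ Q₂ : QuadraticForm ℝ V) :
    Convex ℝ (Set.range fun v ↦ (Q₁ v, Q₂ v)) := by
  rintro _ ⟨u, rfl⟩ _ ⟨v, rfl⟩ s t hs ht -
  obtain ⟨w, hw₁, hw₂⟩ := exists_map_eq_add_and_map_eq_add Q₁ Q₂ (√s • u) (√t • v)
  refine ⟨w, ?_⟩
  simp [hw₁, hw₂, QuadraticMap.map_smul, mul_self_sqrt hs, mul_self_sqrt ht]

theorem exists_nonneg_forall_add_mul_nonneg (F G : QuadraticForm ℝ V) (hslater : ∃ v, G v < 0)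
    (h : ∀ v, G v < 0 → 0 ≤ F v) : ∃ ν : ℝ, 0 ≤ ν ∧ ∀ v, 0 ≤ F v + ν * G v := by
  obtain ⟨p, q, hp, hq, hpq, hsep⟩ := exists_nonneg_coeffs_of_disjoint_negQuadrant
    (convex_range_prodMk F G) (Set.range_nonempty _) <| by
      rintro _ ⟨v, rfl⟩
      exact (lt_or_ge (G v) 0).imp_left (h v)
  replace hsep (v : V) : 0 ≤ p * F v + q * G v := hsep _ ⟨v, rfl⟩
  have hp₀ : 0 < p := by
    refine hp.lt_of_ne fun hp₀ ↦ ?_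
    obtain ⟨v₀, hv₀⟩ := hslater
    have hq₀ : 0 < q := hq.lt_of_ne (hpq.resolve_left (not_not.2 hp₀.symm)).symm
    have := hsep v₀
    rw [← hp₀, zero_mul, zero_add] at this
    exact (mul_neg_of_pos_of_neg hq₀ hv₀).not_ge this
  refine ⟨q / p, by positivity, fun v ↦ ?_⟩
  calc 0 ≤ (p * F v + q * G v) / p := div_nonneg (hsep v) hp₀.le
    _ = F v + q / p * G v := by field_simp

end QuadraticMap

section Homogenization

variable {ι : Type*} [Fintype ι] [DecidableEq ι] (M : Matrix ι ι ℝ) (m : ι → ℝ) (r : ℝ)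

noncomputable def homogenization : QuadraticForm ℝ ((ι → ℝ) × ℝ) :=
  M.toQuadraticForm'.comp (LinearMap.fst ℝ _ ℝ)
    + 2 • QuadraticMap.linMulLin (dotProductEquiv ℝ ι m ∘ₗ LinearMap.fst ℝ _ ℝ) (LinearMap.snd ℝ _ ℝ)
    + r • QuadraticMap.sq.comp (LinearMap.snd ℝ _ ℝ)

@[simp]
lemma homogenization_apply (x : ι → ℝ) (t : ℝ) :
    homogenization M m r (x, t) = x ⬝ᵥ M *ᵥ x + 2 * (m ⬝ᵥ x) * t + r * t ^ 2 := by
  simp only [homogenization, toQuadraticForm', _root_.add_apply, _root_.smul_apply,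
    QuadraticMap.comp_apply, LinearMap.BilinMap.toQuadraticMap_apply, toLinearMap₂'_apply',
    QuadraticMap.linMulLin_apply, QuadraticMap.sq_apply, LinearMap.coe_comp, Function.comp_apply,
    LinearMap.fst_apply, LinearMap.snd_apply, dotProductEquiv_apply_apply, nsmul_eq_mul,
    Nat.cast_ofNat, smul_eq_mul]
  ring

lemma homogenization_mk_zero (x : ι → ℝ) : homogenization M m r (x, 0) = x ⬝ᵥ M *ᵥ x := by
  simp

end Homogenization

section QuadraticFunction

variable {n : ℕ} (M : Matrix (Fin n) (Fin n) ℝ) (m : Fin n → ℝ) (r : ℝ)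

lemma qfun_sub_const (s : ℝ) (x : Fin n → ℝ) : qfun M m (r - s) x = qfun M m r x - s := by
  unfold qfun; ring

lemma homogenization_mk_one (x : Fin n → ℝ) : homogenization M m r (x, 1) = qfun M m r x := by
  simp [qfun]

lemma homogenization_smul_mk (x : Fin n → ℝ) (t : ℝ) :
    homogenization M m r (t • x, t) = t ^ 2 * qfun M m r x := by
  rw [show (t • x, t) = t • (x, (1 : ℝ)) by simp, QuadraticMap.map_smul, homogenization_mk_one,
    smul_eq_mul, sq]

variable {M m r}

lemma dotProduct_mulVec_self_nonneg_of_forall_le_qfun {α : ℝ} (h : ∀ x, α ≤ qfun M m r x)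
    (x : Fin n → ℝ) : 0 ≤ x ⬝ᵥ M *ᵥ x := by
  refine neg_nonpos.1 (nonpos_of_forall_pos_mul_le (b := r - α) fun s hs ↦ ?_)
  have hpos := h (√s • x)
  have hneg := h (-√s • x)
  simp only [qfun, mulVec_smul, dotProduct_smul, smul_dotProduct, smul_eq_mul] at hpos hneg
  linear_combination (hpos + hneg) / 2 + (x ⬝ᵥ M *ᵥ x) * mul_self_sqrt hs.le

lemma homogenization_nonneg_of_neg {A : Matrix (Fin n) (Fin n) ℝ} {a : Fin n → ℝ} {c α : ℝ}
    (hbdd : ∀ x, α ≤ qfun M m r x) (h : ∀ x, qfun M m r x < 0 → 0 ≤ qfun A a c x)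
    (v : (Fin n → ℝ) × ℝ) (hv : homogenization M m r v < 0) : 0 ≤ homogenization A a c v := by
  obtain ⟨x, t⟩ := v
  rcases eq_or_ne t 0 with rfl | ht
  · rw [homogenization_mk_zero] at hv
    exact absurd (dotProduct_mulVec_self_nonneg_of_forall_le_qfun hbdd x) (not_le.2 hv)
  · rw [← smul_inv_smul₀ ht x, homogenization_smul_mk] at hv ⊢
    exact mul_nonneg (sq_nonneg t) (h _ (neg_of_mul_neg_right hv (sq_nonneg t)))

end QuadraticFunction

theorem s_lemma_lower_inactive_general (n : ℕ)
    (A B : Matrix (Fin n) (Fin n) ℝ)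
    (a b : Fin n → ℝ) (c d : ℝ) (α β : ℝ)
    (hlow : ∀ x : Fin n → ℝ, α ≤ qfun B b d x)
    (hSlater : ∃ xhat : Fin n → ℝ, qfun B b d xhat < β)
    (hunsolv : ¬ ∃ x : Fin n → ℝ,
      qfun A a c x < 0 ∧ α ≤ qfun B b d x ∧ qfun B b d x ≤ β) :
    ∃ ν : ℝ, 0 ≤ ν ∧
      (∀ x : Fin n → ℝ, qfun A a c x + ν * (qfun B b d x - β) ≥ 0) ∧
      (∀ x : Fin n → ℝ,
        qfun A a c x + (-(min (-ν) 0)) * (qfun B b d x - β)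
          + (max (-ν) 0) * (α - qfun B b d x) ≥ 0) := by
  obtain ⟨xh, hxh⟩ := hSlater
  have hbdd (x : Fin n → ℝ) : α - β ≤ qfun B b (d - β) x := by
    rw [qfun_sub_const]; linarith [hlow x]
  have hfeas (x : Fin n → ℝ) (hx : qfun B b (d - β) x < 0) : 0 ≤ qfun A a c x := by
    rw [qfun_sub_const] at hx
    exact not_lt.1 fun hf ↦ hunsolv ⟨x, hf, hlow x, by linarith⟩
  obtain ⟨ν, hν, hF⟩ := QuadraticMap.exists_nonneg_forall_add_mul_nonneg
    (homogenization A a c) (homogenization B b (d - β))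
    ⟨(xh, 1), by rw [homogenization_mk_one, qfun_sub_const]; linarith⟩
    (homogenization_nonneg_of_neg hbdd hfeas)
  have hmain (x : Fin n → ℝ) : qfun A a c x + ν * (qfun B b d x - β) ≥ 0 := by
    simpa only [homogenization_mk_one, qfun_sub_const] using hF (x, 1)
  refine ⟨ν, hν, hmain, fun x ↦ ?_⟩
  rw [min_eq_left (neg_nonpos.2 hν), max_eq_right (neg_nonpos.2 hν), neg_neg, zero_mul, add_zero]
  exact hmain x

/-- If `h ≥ α` everywhere and the Slater condition `h(x̂) < β` holds, then
unsolvability of the interval system yields a one-sided multiplier `ν ≥ 0`,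
and in particular `(S₂)` holds with `μ = -ν`. -/
theorem s_lemma_lower_inactive (n : ℕ) (hn : 0 < n)
    (A B : Matrix (Fin n) (Fin n) ℝ) (hA : A.IsSymm) (hB : B.IsSymm)
    (a b : Fin n → ℝ) (c d : ℝ) (α β : ℝ) (hαβ : α ≤ β)
    (hlow : ∀ x : Fin n → ℝ, α ≤ qfun B b d x)
    (hSlater : ∃ xhat : Fin n → ℝ, qfun B b d xhat < β)
    (hunsolv : ¬ ∃ x : Fin n → ℝ,
      qfun A a c x < 0 ∧ α ≤ qfun B b d x ∧ qfun B b d x ≤ β) :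
    ∃ ν : ℝ, 0 ≤ ν ∧
      (∀ x : Fin n → ℝ, qfun A a c x + ν * (qfun B b d x - β) ≥ 0) ∧
      (∀ x : Fin n → ℝ,
        qfun A a c x + (-(min (-ν) 0)) * (qfun B b d x - β)
          + (max (-ν) 0) * (α - qfun B b d x) ≥ 0) :=
  s_lemma_lower_inactive_general n A B a b c d α β hlow hSlater hunsolv
end
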